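/- arXiv:1603.07319 — 9 statements merged into one kernel-verified Lean document; each statement's English description precedes it below -/
import Mathlib

section
/- In the binary peer-prediction model, suppose the strategy profile (θ_1, …, θ_n) is an equilibrium. Then for every agent i and each b ∈ {0,1}: if (1/(n−1))·Σ_{k≠i} q̂_k(1|b) < q*, then θ_i(1|b) = 0; and if (1/(n−1))·Σ_{k≠i} q̂_k(1|b) > q*, then θ_i(1|b) = 1. -/
open Finset

noncomputable section

/-- A real function is affine. -/
def IsAffineFn (f : ℝ → ℝ) : Prop := ∃ a b : ℝ, ∀ x, f x = a * x + b

/-- A (mixed) strategy `s = (θ(1|0), θ(1|1))` is valid if both coordinates lie in `[0,1]`. -/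
def ValidStrat (s : ℝ × ℝ) : Prop := s.1 ∈ Set.Icc (0 : ℝ) 1 ∧ s.2 ∈ Set.Icc (0 : ℝ) 1

/-- Induced report probability `q̂(1|0) = θ(1|0)·q00 + θ(1|1)·q10`, where `q00 = 1 - q10`. -/
def qhat0 (q10 : ℝ) (s : ℝ × ℝ) : ℝ := s.1 * (1 - q10) + s.2 * q10

/-- Induced report probability `q̂(1|1) = θ(1|0)·q01 + θ(1|1)·q11`, where `q01 = 1 - q11`. -/
def qhat1 (q11 : ℝ) (s : ℝ × ℝ) : ℝ := s.1 * (1 - q11) + s.2 * q11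

/-- Expected payoff of agent `i` under profile `θ`, where `ℓ0 = ℓ(·,0)` and `ℓ1 = ℓ(·,1)`
are the two payoff functions of the mechanism,
`q1 = q10/(1 - q11 + q10)` is the marginal probability of signal `1` and `q0 = 1 - q1`:
`ν_i(θ) = Σ_{b∈{0,1}} q_b·[(1−θ_i(1|b))·(1/(n−1))Σ_{j≠i} ℓ(q̂_j(1|b),0)
                           + θ_i(1|b)·(1/(n−1))Σ_{j≠i} ℓ(q̂_j(1|b),1)]`. -/
def payoff (n : ℕ) (q10 q11 : ℝ) (ℓ0 ℓ1 : ℝ → ℝ) (θ : Fin n → ℝ × ℝ) (i : Fin n) : ℝ :=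
  (1 - q10 / (1 - q11 + q10)) *
      ((1 - (θ i).1) * (((n : ℝ) - 1)⁻¹ * ∑ j ∈ univ.erase i, ℓ0 (qhat0 q10 (θ j)))
        + (θ i).1 * (((n : ℝ) - 1)⁻¹ * ∑ j ∈ univ.erase i, ℓ1 (qhat0 q10 (θ j))))
    + (q10 / (1 - q11 + q10)) *
      ((1 - (θ i).2) * (((n : ℝ) - 1)⁻¹ * ∑ j ∈ univ.erase i, ℓ0 (qhat1 q11 (θ j)))
        + (θ i).2 * (((n : ℝ) - 1)⁻¹ * ∑ j ∈ univ.erase i, ℓ1 (qhat1 q11 (θ j))))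

/-- `θ` is a (Bayesian Nash) equilibrium of the peer-prediction mechanism: every agent plays
a valid strategy, and no agent can improve her expected payoff by a unilateral deviation. -/
def IsEquilibrium (n : ℕ) (q10 q11 : ℝ) (ℓ0 ℓ1 : ℝ → ℝ) (θ : Fin n → ℝ × ℝ) : Prop :=
  (∀ i, ValidStrat (θ i)) ∧
  ∀ (i : Fin n) (s : ℝ × ℝ), ValidStrat s →
    payoff n q10 q11 ℓ0 ℓ1 θ i ≥ payoff n q10 q11 ℓ0 ℓ1 (Function.update θ i s) i

/-! Holding the other agents fixed, agent `i`'s payoff is affine in her own strategy: the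
coefficient of `θ_i(1|b)` is `q_b > 0` times the average over the others of
`ℓ(q̂_j(1|b),1) − ℓ(q̂_j(1|b),0)`. Since `ℓ(·,1) − ℓ(·,0)` is affine, this average is its value at
the average report `(1/(n−1)) Σ_j q̂_j(1|b)`; being negative at `q10`, positive at `q11` and zero
at `q*`, it has the sign of that average minus `q*`. An equilibrium strategy maximizes this affine
function over `[0,1]`, so it sits at the endpoint the sign selects. -/

open Set Function

namespace IsAffineFn

theorem sub {f g : ℝ → ℝ} (hf : IsAffineFn f) (hg : IsAffineFn g) :
    IsAffineFn fun x => f x - g x := by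
  obtain ⟨a, b, hf⟩ := hf
  obtain ⟨c, d, hg⟩ := hg
  exact ⟨a - c, b - d, fun x => by simp only [hf, hg]; ring⟩

theorem strictMono_of_lt {f : ℝ → ℝ} (hf : IsAffineFn f) {x y : ℝ} (hxy : x < y)
    (hfxy : f x < f y) : StrictMono f := by
  obtain ⟨a, b, hf⟩ := hf
  have ha : 0 < a := by
    rw [hf, hf] at hfxy
    nlinarith
  intro u v huv
  rw [hf, hf]
  nlinarith

theorem map_average {f : ℝ → ℝ} (hf : IsAffineFn f) {ι : Type*} {s : Finset ι}
    (hs : s.Nonempty) (x : ι → ℝ) :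
    f ((s.card : ℝ)⁻¹ * ∑ j ∈ s, x j) = (s.card : ℝ)⁻¹ * ∑ j ∈ s, f (x j) := by
  obtain ⟨a, b, hf⟩ := hf
  have hcard : (s.card : ℝ) ≠ 0 := by exact_mod_cast hs.card_pos.ne'
  simp only [hf, Finset.sum_add_distrib, ← Finset.mul_sum, Finset.sum_const, nsmul_eq_mul]
  field_simp

end IsAffineFn

theorem eq_zero_of_isMaxOn_mul_of_neg {c t : ℝ} (ht : t ∈ Icc (0 : ℝ) 1)
    (hmax : IsMaxOn (fun x => c * x) (Icc 0 1) t) (hc : c < 0) : t = 0 := by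
  have := isMaxOn_iff.1 hmax 0 (left_mem_Icc.2 zero_le_one)
  simp only [mul_zero] at this
  nlinarith [ht.1]

theorem eq_one_of_isMaxOn_mul_of_pos {c t : ℝ} (ht : t ∈ Icc (0 : ℝ) 1)
    (hmax : IsMaxOn (fun x => c * x) (Icc 0 1) t) (hc : 0 < c) : t = 1 := by
  have := isMaxOn_iff.1 hmax 1 (right_mem_Icc.2 zero_le_one)
  simp only [mul_one] at this
  nlinarith [ht.2]

section Payoff

variable {n : ℕ} {q10 q11 : ℝ} {ℓ0 ℓ1 : ℝ → ℝ}

def othersAverage (x : Fin n → ℝ) (i : Fin n) : ℝ := ((n : ℝ) - 1)⁻¹ * ∑ j ∈ univ.erase i, x j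

theorem IsAffineFn.map_othersAverage {f : ℝ → ℝ} (hf : IsAffineFn f) (hn : 2 ≤ n)
    (x : Fin n → ℝ) (i : Fin n) :
    f (othersAverage x i) = othersAverage (fun j => f (x j)) i := by
  have hcard : ((univ.erase i).card : ℝ) = n - 1 := by
    rw [card_erase_of_mem (mem_univ i), card_univ, Fintype.card_fin, Nat.cast_sub (by omega),
      Nat.cast_one]
  have hothers : (univ.erase i).Nonempty := by
    rw [← card_pos, card_erase_of_mem (mem_univ i), card_univ, Fintype.card_fin]
    omega
  simpa only [othersAverage, hcard] using hf.map_average hothers x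

theorem payoff_update_sub (θ : Fin n → ℝ × ℝ) (i : Fin n) (s : ℝ × ℝ) :
    payoff n q10 q11 ℓ0 ℓ1 (update θ i s) i - payoff n q10 q11 ℓ0 ℓ1 θ i =
      (1 - q10 / (1 - q11 + q10)) * (s.1 - (θ i).1) *
          othersAverage (fun j => ℓ1 (qhat0 q10 (θ j)) - ℓ0 (qhat0 q10 (θ j))) i
        + q10 / (1 - q11 + q10) * (s.2 - (θ i).2) *
          othersAverage (fun j => ℓ1 (qhat1 q11 (θ j)) - ℓ0 (qhat1 q11 (θ j))) i := by
  have hothers : ∀ g : ℝ × ℝ → ℝ,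
      ∑ j ∈ univ.erase i, g (update θ i s j) = ∑ j ∈ univ.erase i, g (θ j) :=
    fun g => Finset.sum_congr rfl fun j hj => by rw [update_of_ne (Finset.ne_of_mem_erase hj)]
  simp only [payoff, hothers fun p => ℓ0 (qhat0 q10 p), hothers fun p => ℓ1 (qhat0 q10 p),
    hothers fun p => ℓ0 (qhat1 q11 p), hothers fun p => ℓ1 (qhat1 q11 p), update_self,
    othersAverage, Finset.sum_sub_distrib]
  ring

theorem IsEquilibrium.isMaxOn_fst {θ : Fin n → ℝ × ℝ} (heq : IsEquilibrium n q10 q11 ℓ0 ℓ1 θ)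
    (i : Fin n) :
    IsMaxOn (fun x => (1 - q10 / (1 - q11 + q10)) *
        othersAverage (fun j => ℓ1 (qhat0 q10 (θ j)) - ℓ0 (qhat0 q10 (θ j))) i
          * x) (Icc 0 1) (θ i).1 := by
  refine isMaxOn_iff.2 fun x hx => ?_
  have hdev := heq.2 i (x, (θ i).2) ⟨hx, (heq.1 i).2⟩
  have hdiff := payoff_update_sub (q10 := q10) (q11 := q11) (ℓ0 := ℓ0) (ℓ1 := ℓ1) θ i (x, (θ i).2)
  simp only [sub_self, mul_zero, zero_mul, add_zero] at hdiff
  linarith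

theorem IsEquilibrium.isMaxOn_snd {θ : Fin n → ℝ × ℝ} (heq : IsEquilibrium n q10 q11 ℓ0 ℓ1 θ)
    (i : Fin n) :
    IsMaxOn (fun x => q10 / (1 - q11 + q10) *
        othersAverage (fun j => ℓ1 (qhat1 q11 (θ j)) - ℓ0 (qhat1 q11 (θ j))) i
          * x) (Icc 0 1) (θ i).2 := by
  refine isMaxOn_iff.2 fun x hx => ?_
  have hdev := heq.2 i ((θ i).1, x) ⟨(heq.1 i).1, hx⟩
  have hdiff := payoff_update_sub (q10 := q10) (q11 := q11) (ℓ0 := ℓ0) (ℓ1 := ℓ1) θ i ((θ i).1, x)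
  simp only [sub_self, mul_zero, zero_mul, zero_add] at hdiff
  linarith

end Payoff

theorem equilibrium_best_response_criterion_general (n : ℕ) (hn : 2 ≤ n) (q10 q11 : ℝ)
    (hq10 : 0 < q10) (hcorr : q10 < q11) (hq11 : q11 < 1)
    (ℓ0 ℓ1 : ℝ → ℝ) (haff0 : IsAffineFn ℓ0) (haff1 : IsAffineFn ℓ1)
    (hproper0 : ℓ0 q10 > ℓ1 q10) (hproper1 : ℓ1 q11 > ℓ0 q11)
    (qs : ℝ) (hbe : ℓ0 qs = ℓ1 qs)
    (θ : Fin n → ℝ × ℝ) (heq : IsEquilibrium n q10 q11 ℓ0 ℓ1 θ) (i : Fin n) :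
    ((((n : ℝ) - 1)⁻¹ * ∑ k ∈ univ.erase i, qhat0 q10 (θ k) < qs → (θ i).1 = 0) ∧
     (((n : ℝ) - 1)⁻¹ * ∑ k ∈ univ.erase i, qhat0 q10 (θ k) > qs → (θ i).1 = 1)) ∧
    ((((n : ℝ) - 1)⁻¹ * ∑ k ∈ univ.erase i, qhat1 q11 (θ k) < qs → (θ i).2 = 0) ∧
     (((n : ℝ) - 1)⁻¹ * ∑ k ∈ univ.erase i, qhat1 q11 (θ k) > qs → (θ i).2 = 1)) := by
  set advantage : ℝ → ℝ := fun x => ℓ1 x - ℓ0 x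
  have haff : IsAffineFn advantage := haff1.sub haff0
  have hmono : StrictMono advantage :=
    haff.strictMono_of_lt hcorr (by simp only [advantage]; linarith)
  have hzero : advantage qs = 0 := by simp only [advantage]; linarith
  have hden : 0 < 1 - q11 + q10 := by linarith
  have hq1 : 0 < q10 / (1 - q11 + q10) := div_pos hq10 hden
  have hq0 : 0 < 1 - q10 / (1 - q11 + q10) := by
    rw [sub_pos, div_lt_one hden]; linarith
  have hmax0 := heq.isMaxOn_fst i
  have hmax1 := heq.isMaxOn_snd i
  rw [← haff.map_othersAverage hn] at hmax0 hmax1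
  refine ⟨⟨fun h => ?_, fun h => ?_⟩, fun h => ?_, fun h => ?_⟩
  · exact eq_zero_of_isMaxOn_mul_of_neg (heq.1 i).1 hmax0
      (mul_neg_of_pos_of_neg hq0 (hzero ▸ hmono h))
  · exact eq_one_of_isMaxOn_mul_of_pos (heq.1 i).1 hmax0 (mul_pos hq0 (hzero ▸ hmono h))
  · exact eq_zero_of_isMaxOn_mul_of_neg (heq.1 i).2 hmax1
      (mul_neg_of_pos_of_neg hq1 (hzero ▸ hmono h))
  · exact eq_one_of_isMaxOn_mul_of_pos (heq.1 i).2 hmax1 (mul_pos hq1 (hzero ▸ hmono h))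

/-- **Best-response criterion (Claim 2.7).**  In the binary peer-prediction model, if the
profile `θ` is an equilibrium then for every agent `i` and each signal `b ∈ {0,1}`:
if `(1/(n−1))·Σ_{k≠i} q̂_k(1|b) < q*` then `θ_i(1|b) = 0`, and if
`(1/(n−1))·Σ_{k≠i} q̂_k(1|b) > q*` then `θ_i(1|b) = 1`. -/
theorem equilibrium_best_response_criterion (n : ℕ) (hn : 2 ≤ n) (q10 q11 : ℝ)
    (hq10 : 0 < q10) (hcorr : q10 < q11) (hq11 : q11 < 1)
    (ℓ0 ℓ1 : ℝ → ℝ) (haff0 : IsAffineFn ℓ0) (haff1 : IsAffineFn ℓ1)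
    (hproper0 : ℓ0 q10 > ℓ1 q10) (hproper1 : ℓ1 q11 > ℓ0 q11)
    (qs : ℝ) (hqs : qs ∈ Set.Ioo q10 q11) (hbe : ℓ0 qs = ℓ1 qs)
    (θ : Fin n → ℝ × ℝ) (heq : IsEquilibrium n q10 q11 ℓ0 ℓ1 θ) (i : Fin n) :
    ((((n : ℝ) - 1)⁻¹ * ∑ k ∈ univ.erase i, qhat0 q10 (θ k) < qs → (θ i).1 = 0) ∧
     (((n : ℝ) - 1)⁻¹ * ∑ k ∈ univ.erase i, qhat0 q10 (θ k) > qs → (θ i).1 = 1)) ∧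
    ((((n : ℝ) - 1)⁻¹ * ∑ k ∈ univ.erase i, qhat1 q11 (θ k) < qs → (θ i).2 = 0) ∧
     (((n : ℝ) - 1)⁻¹ * ∑ k ∈ univ.erase i, qhat1 q11 (θ k) > qs → (θ i).2 = 1)) :=
  equilibrium_best_response_criterion_general n hn q10 q11 hq10 hcorr hq11 ℓ0 ℓ1 haff0 haff1
    hproper0 hproper1 qs hbe θ heq i
end
end

section
/- In the binary peer-prediction model with break-even point q*, every equilibrium is symmetric, and a profile is an equilibrium if and only if it is the symmetric profile in which every agent plays one of the following strategies (θ(1|0), θ(1|1)): (0,0) [all-0], (1,1) [all-1], (0,1) [truth-telling], (q*, q*), (0, q*/q11), ((q* − q10)/q00, 1); additionally (1,0) [lying] is an equilibrium if and only if q01 ≤ q* ≤ q00; (1, (q* − q01)/q11) is an equilibrium if and only if q01 ≤ q*; and (q*/q00, 0) is an equilibrium if and only if q* ≤ q00. -/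
open Finset

noncomputable section

namespace PPAux

lemma card_erase_real {n : ℕ} (hn : 2 ≤ n) (i : Fin n) :
    ((univ.erase i).card : ℝ) = (n : ℝ) - 1 := by
  rw [card_erase_of_mem (mem_univ i), card_univ, Fintype.card_fin,
    Nat.cast_sub (by omega)]
  simp

lemma sum_affine {n : ℕ} (hn : 2 ≤ n) (i : Fin n) (a b : ℝ) (f : Fin n → ℝ) :
    ∑ j ∈ univ.erase i, (a * f j + b) =
      a * (∑ j ∈ univ.erase i, f j) + ((n : ℝ) - 1) * b := by
  rw [Finset.sum_add_distrib, ← Finset.mul_sum, Finset.sum_const, nsmul_eq_mul,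
    card_erase_real hn i]

lemma opt_iff (q0 q1 : ℝ) (h0 : 0 < q0) (h1 : 0 < q1) (t : ℝ × ℝ) (ht : ValidStrat t)
    (K L : ℝ) :
    (∀ s : ℝ × ℝ, ValidStrat s → 0 ≤ q0 * ((t.1 - s.1) * K) + q1 * ((t.2 - s.2) * L)) ↔
    ((0 < K → t.1 = 1) ∧ (K < 0 → t.1 = 0) ∧ (0 < L → t.2 = 1) ∧ (L < 0 → t.2 = 0)) := by
  obtain ⟨ht1, ht2⟩ := ht
  simp only [Set.mem_Icc] at ht1 ht2
  constructor
  · intro h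
    refine ⟨?_, ?_, ?_, ?_⟩
    · intro hK
      have := h (1, t.2) ⟨by simp, by simp [Set.mem_Icc, ht2.1, ht2.2]⟩
      simp only at this
      nlinarith [ht1.2, mul_pos h0 hK]
    · intro hK
      have := h (0, t.2) ⟨by simp, by simp [Set.mem_Icc, ht2.1, ht2.2]⟩
      simp only at this
      nlinarith [ht1.1, mul_pos h0 (neg_pos.mpr hK)]
    · intro hL
      have := h (t.1, 1) ⟨by simp [Set.mem_Icc, ht1.1, ht1.2], by simp⟩
      simp only at this
      nlinarith [ht2.2, mul_pos h1 hL]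
    · intro hL
      have := h (t.1, 0) ⟨by simp [Set.mem_Icc, ht1.1, ht1.2], by simp⟩
      simp only at this
      nlinarith [ht2.1, mul_pos h1 (neg_pos.mpr hL)]
  · rintro ⟨c1, c2, c3, c4⟩ s hs
    obtain ⟨hs1, hs2⟩ := hs
    simp only [Set.mem_Icc] at hs1 hs2
    have A : 0 ≤ (t.1 - s.1) * K := by
      rcases lt_trichotomy K 0 with h | h | h
      · rw [c2 h]; nlinarith [hs1.1]
      · simp [h]
      · rw [c1 h]; nlinarith [hs1.2]
    have B : 0 ≤ (t.2 - s.2) * L := by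
      rcases lt_trichotomy L 0 with h | h | h
      · rw [c4 h]; nlinarith [hs2.1]
      · simp [h]
      · rw [c3 h]; nlinarith [hs2.2]
    have := mul_nonneg h0.le A
    have := mul_nonneg h1.le B
    linarith

def EqCond (n : ℕ) (q10 q11 qs : ℝ) (θ : Fin n → ℝ × ℝ) : Prop :=
  (∀ i, ValidStrat (θ i)) ∧
  ∀ i : Fin n,
    (((n:ℝ)-1) * qs < ∑ j ∈ univ.erase i, qhat0 q10 (θ j) → (θ i).1 = 1) ∧
    ((∑ j ∈ univ.erase i, qhat0 q10 (θ j)) < ((n:ℝ)-1) * qs → (θ i).1 = 0) ∧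
    (((n:ℝ)-1) * qs < ∑ j ∈ univ.erase i, qhat1 q11 (θ j) → (θ i).2 = 1) ∧
    ((∑ j ∈ univ.erase i, qhat1 q11 (θ j)) < ((n:ℝ)-1) * qs → (θ i).2 = 0)

lemma equil_iff {n : ℕ} (hn : 2 ≤ n) {q10 q11 : ℝ}
    (hq10 : 0 < q10) (hcorr : q10 < q11) (hq11 : q11 < 1)
    (ℓ0 ℓ1 : ℝ → ℝ) (haff0 : IsAffineFn ℓ0) (haff1 : IsAffineFn ℓ1)
    (hproper0 : ℓ0 q10 > ℓ1 q10) (hproper1 : ℓ1 q11 > ℓ0 q11)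
    {qs : ℝ} (hqs : qs ∈ Set.Ioo q10 q11) (hbe : ℓ0 qs = ℓ1 qs)
    (θ : Fin n → ℝ × ℝ) :
    IsEquilibrium n q10 q11 ℓ0 ℓ1 θ ↔ EqCond n q10 q11 qs θ := by
  obtain ⟨a0, b0, h0⟩ := haff0
  obtain ⟨a1, b1, h1⟩ := haff1
  obtain ⟨hqs1, hqs2⟩ := hqs
  rw [h0, h1] at hproper0 hbe
  have hα : 0 < a1 - a0 := by nlinarith
  have hb1 : b1 = b0 + (a0 - a1) * qs := by linarith
  have hnpos : (0:ℝ) < (n:ℝ) - 1 := by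
    have : (2:ℝ) ≤ (n:ℝ) := by exact_mod_cast hn
    linarith
  have hden : (0:ℝ) < 1 - q11 + q10 := by linarith
  have hw0 : 0 < 1 - q10 / (1 - q11 + q10) := by
    rw [sub_pos, div_lt_one hden]; linarith
  have hw1 : 0 < q10 / (1 - q11 + q10) := div_pos hq10 hden
  have hpay : ∀ (η : Fin n → ℝ × ℝ) (i : Fin n), payoff n q10 q11 ℓ0 ℓ1 η i =
      (1 - q10/(1-q11+q10)) *
        ((1-(η i).1) * (((n:ℝ)-1)⁻¹ * (a0 * (∑ j ∈ univ.erase i, qhat0 q10 (η j)) + ((n:ℝ)-1)*b0))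
          + (η i).1 * (((n:ℝ)-1)⁻¹ * (a1 * (∑ j ∈ univ.erase i, qhat0 q10 (η j)) + ((n:ℝ)-1)*b1)))
      + (q10/(1-q11+q10)) *
        ((1-(η i).2) * (((n:ℝ)-1)⁻¹ * (a0 * (∑ j ∈ univ.erase i, qhat1 q11 (η j)) + ((n:ℝ)-1)*b0))
          + (η i).2 * (((n:ℝ)-1)⁻¹ * (a1 * (∑ j ∈ univ.erase i, qhat1 q11 (η j)) + ((n:ℝ)-1)*b1))) := by
    intro η i
    simp only [payoff, h0, h1, sum_affine hn]
  unfold IsEquilibrium EqCond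
  apply and_congr_right
  intro hvalid
  apply forall_congr'
  intro i
  set P := ∑ j ∈ univ.erase i, qhat0 q10 (θ j) with hP
  set Q := ∑ j ∈ univ.erase i, qhat1 q11 (θ j) with hQ
  have hupd : ∀ s : ℝ × ℝ, payoff n q10 q11 ℓ0 ℓ1 (Function.update θ i s) i =
      (1 - q10/(1-q11+q10)) *
        ((1-s.1) * (((n:ℝ)-1)⁻¹ * (a0 * P + ((n:ℝ)-1)*b0))
          + s.1 * (((n:ℝ)-1)⁻¹ * (a1 * P + ((n:ℝ)-1)*b1)))
      + (q10/(1-q11+q10)) *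
        ((1-s.2) * (((n:ℝ)-1)⁻¹ * (a0 * Q + ((n:ℝ)-1)*b0))
          + s.2 * (((n:ℝ)-1)⁻¹ * (a1 * Q + ((n:ℝ)-1)*b1))) := by
    intro s
    rw [hpay]
    have e0 : ∑ j ∈ univ.erase i, qhat0 q10 (Function.update θ i s j) = P := by
      apply Finset.sum_congr rfl
      intro j hj
      rw [Function.update_of_ne (ne_of_mem_erase hj)]
    have e1 : ∑ j ∈ univ.erase i, qhat1 q11 (Function.update θ i s j) = Q := by
      apply Finset.sum_congr rfl
      intro j hj
      rw [Function.update_of_ne (ne_of_mem_erase hj)]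
    rw [e0, e1, Function.update_self]
  have hdiff : ∀ s : ℝ × ℝ, payoff n q10 q11 ℓ0 ℓ1 θ i
      - payoff n q10 q11 ℓ0 ℓ1 (Function.update θ i s) i
      = (((n:ℝ)-1)⁻¹ * (a1 - a0)) *
        ((1 - q10/(1-q11+q10)) * (((θ i).1 - s.1) * (P - ((n:ℝ)-1)*qs))
          + (q10/(1-q11+q10)) * (((θ i).2 - s.2) * (Q - ((n:ℝ)-1)*qs))) := by
    intro s
    rw [hpay θ i, hupd s, hb1]
    ring
  have hfac : (0:ℝ) < ((n:ℝ)-1)⁻¹ * (a1 - a0) :=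
    mul_pos (inv_pos.mpr hnpos) hα
  constructor
  · intro h
    have := (opt_iff _ _ hw0 hw1 (θ i) (hvalid i) (P - ((n:ℝ)-1)*qs) (Q - ((n:ℝ)-1)*qs)).mp ?_
    · refine ⟨fun hh => this.1 (by linarith), fun hh => this.2.1 (by linarith),
        fun hh => this.2.2.1 (by linarith), fun hh => this.2.2.2 (by linarith)⟩
    · intro s hs
      have h2 := h s hs
      have h3 : 0 ≤ payoff n q10 q11 ℓ0 ℓ1 θ i
          - payoff n q10 q11 ℓ0 ℓ1 (Function.update θ i s) i := by linarith [h2]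
      rw [hdiff s] at h3
      nlinarith [h3]
  · intro h s hs
    have h4 := (opt_iff _ _ hw0 hw1 (θ i) (hvalid i) (P - ((n:ℝ)-1)*qs) (Q - ((n:ℝ)-1)*qs)).mpr
      ⟨fun hh => h.1 (by linarith), fun hh => h.2.1 (by linarith),
        fun hh => h.2.2.1 (by linarith), fun hh => h.2.2.2 (by linarith)⟩ s hs
    have h5 : 0 ≤ payoff n q10 q11 ℓ0 ℓ1 θ i
        - payoff n q10 q11 ℓ0 ℓ1 (Function.update θ i s) i := by
      rw [hdiff s]
      exact mul_nonneg hfac.le h4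
    linarith


set_option maxHeartbeats 1000000 in
lemma x_const {n : ℕ} (hn : 2 ≤ n) {a b t : ℝ} (ha : 0 < a) (hab : a < b) (hb : b < 1)
    (θ : Fin n → ℝ × ℝ) (hv : ∀ i, ValidStrat (θ i))
    (hc1 : ∀ i : Fin n, ((n:ℝ)-1) * t < ∑ j ∈ univ.erase i, qhat0 a (θ j) → (θ i).1 = 1)
    (hc0 : ∀ i : Fin n, (∑ j ∈ univ.erase i, qhat0 a (θ j)) < ((n:ℝ)-1) * t → (θ i).1 = 0)
    (hd1 : ∀ i : Fin n, ((n:ℝ)-1) * t < ∑ j ∈ univ.erase i, qhat1 b (θ j) → (θ i).2 = 1)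
    (hd0 : ∀ i : Fin n, (∑ j ∈ univ.erase i, qhat1 b (θ j)) < ((n:ℝ)-1) * t → (θ i).2 = 0) :
    ∀ i j, qhat0 a (θ i) = qhat0 a (θ j) := by
  have hne : Nonempty (Fin n) := ⟨⟨0, by omega⟩⟩
  set x : Fin n → ℝ := fun i => qhat0 a (θ i) with hxdef
  set y : Fin n → ℝ := fun i => qhat1 b (θ i) with hydef
  have hx : ∀ i, x i = (θ i).1 * (1-a) + (θ i).2 * a := fun i => rfl
  have hy : ∀ i, y i = (θ i).1 * (1-b) + (θ i).2 * b := fun i => rfl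
  have hbd : ∀ i, 0 ≤ (θ i).1 ∧ (θ i).1 ≤ 1 ∧ 0 ≤ (θ i).2 ∧ (θ i).2 ≤ 1 := by
    intro i
    have := hv i
    simp only [ValidStrat, Set.mem_Icc] at this
    tauto
  -- rewrite the sums
  set X : ℝ := ∑ j, x j with hXdef
  set Y : ℝ := ∑ j, y j with hYdef
  have hsum0 : ∀ i : Fin n, ∑ j ∈ univ.erase i, qhat0 a (θ j) = X - x i := by
    intro i
    rw [hXdef, Finset.sum_erase_eq_sub (mem_univ i)]
  have hsum1 : ∀ i : Fin n, ∑ j ∈ univ.erase i, qhat1 b (θ j) = Y - y i := by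
    intro i
    rw [hYdef, Finset.sum_erase_eq_sub (mem_univ i)]
  set B : ℝ := X - ((n:ℝ)-1)*t with hBdef
  set C : ℝ := Y - ((n:ℝ)-1)*t with hCdef
  have H1 : ∀ i, x i < B → (θ i).1 = 1 := by
    intro i h; exact hc1 i (by rw [hsum0 i]; rw [hBdef] at h; linarith)
  have H0 : ∀ i, B < x i → (θ i).1 = 0 := by
    intro i h; exact hc0 i (by rw [hsum0 i]; rw [hBdef] at h; linarith)
  have K1 : ∀ i, y i < C → (θ i).2 = 1 := by
    intro i h; exact hd1 i (by rw [hsum1 i]; rw [hCdef] at h; linarith)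
  have K0 : ∀ i, C < y i → (θ i).2 = 0 := by
    intro i h; exact hd0 i (by rw [hsum1 i]; rw [hCdef] at h; linarith)
  -- basic per-agent facts
  have hxy : ∀ i, a * y i - b * x i = (θ i).1 * (a - b) := by
    intro i; rw [hx i, hy i]; ring
  have hx01 : ∀ i, 0 ≤ x i ∧ x i ≤ 1 := by
    intro i; obtain ⟨p0, p1, q0, q1⟩ := hbd i; rw [hx i]; constructor <;> nlinarith
  -- main argument
  by_contra hcon
  push_neg at hcon
  obtain ⟨i0, j0, hij⟩ := hcon
  obtain ⟨M, -, hM⟩ := Finset.exists_max_image univ x univ_nonempty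
  obtain ⟨m, -, hm⟩ := Finset.exists_min_image univ x univ_nonempty
  have hmM : x m < x M := by
    rcases lt_or_eq_of_le (hm M (mem_univ M)) with h | h
    · exact h
    · exfalso
      apply hij
      have e1 : x i0 = x m := le_antisymm (by rw [h]; exact hM i0 (mem_univ i0)) (hm i0 (mem_univ i0))
      have e2 : x j0 = x m := le_antisymm (by rw [h]; exact hM j0 (mem_univ j0)) (hm j0 (mem_univ j0))
      exact e1.trans e2.symm
  -- no agents strictly on both sides of B
  have both : ∀ i k : Fin n, x i < B → B < x k → False := by
    intro i k hiB hkB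
    have hp1 : (θ i).1 = 1 := H1 i hiB
    have hp0 : (θ k).1 = 0 := H0 k hkB
    rcases lt_or_ge C (y k) with h | h
    · have hq0 : (θ k).2 = 0 := K0 k h
      have hxk : x k = 0 := by rw [hx k, hp0, hq0]; ring
      have := (hx01 i).1
      rw [hxk] at hkB
      linarith
    · rcases lt_or_ge (y i) C with h2 | h2
      · have hq1 : (θ i).2 = 1 := K1 i h2
        have hxi : x i = 1 := by rw [hx i, hp1, hq1]; ring
        have hxk2 : x k ≤ a := by
          rw [hx k, hp0]
          obtain ⟨-, -, -, q1⟩ := hbd k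
          nlinarith
        rw [hxi] at hiB
        linarith
      · -- y k ≤ C ≤ y i
        have hyk : a * y k - b * x k = 0 := by rw [hxy k, hp0]; ring
        have hyi : a * y i - b * x i = a - b := by rw [hxy i, hp1]; ring
        have hxik : x i < x k := lt_trans hiB hkB
        have hyki : y k ≤ y i := le_trans h h2
        nlinarith [mul_le_mul_of_nonneg_left hyki ha.le, mul_lt_mul_of_pos_left hxik (lt_trans ha hab)]
  -- split: all ≤ B or all ≥ B
  by_cases hbelow : ∃ i, x i < B
  · -- Case II : all x ≤ B
    obtain ⟨i1, hi1⟩ := hbelow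
    have hallle : ∀ k, x k ≤ B := by
      intro k
      by_contra hk
      push_neg at hk
      exact both i1 k hi1 hk
    have hmB : x m < B := lt_of_le_of_lt (hm i1 (mem_univ i1)) hi1
    have hp1 : (θ m).1 = 1 := H1 m hmB
    have hym : a * y m - b * x m = a - b := by rw [hxy m, hp1]; ring
    have hge : ∀ i, a * y i - b * x i ≥ a - b := by
      intro i
      rw [hxy i]
      obtain ⟨-, p1, -, -⟩ := hbd i
      nlinarith
    have hymin : y m < y M := by
      have h1 := hge M
      have h2 : b * x m < b * x M := mul_lt_mul_of_pos_left hmM (lt_trans ha hab)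
      nlinarith
    rcases lt_or_ge (y m) C with h | h
    · have hq1 : (θ m).2 = 1 := K1 m h
      have hxm : x m = 1 := by rw [hx m, hp1, hq1]; ring
      have := (hx01 M).2
      rw [hxm] at hmM
      linarith
    · have hCM : C < y M := lt_of_le_of_lt h hymin
      have hq0 : (θ M).2 = 0 := K0 M hCM
      have hyM : y M ≤ 1 - b := by
        rw [hy M, hq0]
        obtain ⟨-, p1, -, -⟩ := hbd M
        nlinarith
      have hymge : 1 - b ≤ y m := by
        rw [hy m, hp1]
        obtain ⟨-, -, q0, -⟩ := hbd m
        nlinarith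
      linarith
  · -- Case I : all x ≥ B
    push_neg at hbelow
    have hMB : B < x M := lt_of_le_of_lt (hbelow m) hmM
    have hp0 : (θ M).1 = 0 := H0 M hMB
    have hyM : a * y M - b * x M = 0 := by rw [hxy M, hp0]; ring
    have hle : ∀ i, a * y i - b * x i ≤ 0 := by
      intro i
      rw [hxy i]
      obtain ⟨p0, -, -, -⟩ := hbd i
      nlinarith
    have hymax : y m < y M := by
      have h1 := hle m
      have h2 : b * x m < b * x M := mul_lt_mul_of_pos_left hmM (lt_trans ha hab)
      nlinarith
    rcases lt_or_ge C (y M) with h | h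
    · have hq0 : (θ M).2 = 0 := K0 M h
      have hxM : x M = 0 := by rw [hx M, hp0, hq0]; ring
      have := (hx01 m).1
      rw [hxM] at hmM
      linarith
    · have hymC : y m < C := lt_of_lt_of_le hymax h
      have hq1 : (θ m).2 = 1 := K1 m hymC
      have hymb : b ≤ y m := by
        rw [hy m, hq1]
        obtain ⟨p0, -, -, -⟩ := hbd m
        nlinarith
      have hyMb : y M ≤ b := by
        have hxMa : x M ≤ a := by
          rw [hx M, hp0]
          obtain ⟨-, -, -, q1⟩ := hbd M
          nlinarith
        nlinarith [mul_le_mul_of_nonneg_left hxMa (le_of_lt (lt_trans ha hab)), hyM, ha]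
      linarith


def SymCond (q10 q11 qs : ℝ) (s : ℝ × ℝ) : Prop :=
  ValidStrat s ∧ (qs < qhat0 q10 s → s.1 = 1) ∧ (qhat0 q10 s < qs → s.1 = 0) ∧
  (qs < qhat1 q11 s → s.2 = 1) ∧ (qhat1 q11 s < qs → s.2 = 0)

set_option maxHeartbeats 1000000 in
lemma classify {q10 q11 qs : ℝ} (hq10 : 0 < q10) (hl : q10 < qs) (hr : qs < q11)
    (hq11 : q11 < 1) (s : ℝ × ℝ) :
    SymCond q10 q11 qs s ↔
      (s = (0, 0) ∨ s = (1, 1) ∨ s = (0, 1) ∨ s = (qs, qs) ∨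
        s = (0, qs / q11) ∨ s = ((qs - q10) / (1 - q10), 1) ∨
        (s = (1, 0) ∧ 1 - q11 ≤ qs ∧ qs ≤ 1 - q10) ∨
        (s = (1, (qs - (1 - q11)) / q11) ∧ 1 - q11 ≤ qs) ∨
        (s = (qs / (1 - q10), 0) ∧ qs ≤ 1 - q10)) := by
  obtain ⟨s1, s2⟩ := s
  have hq11p : (0:ℝ) < q11 := lt_trans hq10 (lt_trans hl hr)
  have hA : (0:ℝ) < 1 - q10 := by linarith
  have hqsp : (0:ℝ) < qs := lt_trans hq10 hl
  have hqs1 : qs < 1 := lt_trans hr hq11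
  constructor
  · rintro ⟨⟨hv1, hv2⟩, c1, c2, c3, c4⟩
    simp only [Set.mem_Icc] at hv1 hv2
    simp only [qhat0, qhat1] at c1 c2 c3 c4
    simp only [Prod.mk.injEq]
    rcases lt_trichotomy (s1 * (1 - q10) + s2 * q10) qs with hu | hu | hu
    · have e1 : s1 = 0 := c2 hu
      rcases lt_trichotomy (s1 * (1 - q11) + s2 * q11) qs with hw | hw | hw
      · exact Or.inl ⟨e1, c4 hw⟩
      · refine Or.inr (Or.inr (Or.inr (Or.inr (Or.inl ⟨e1, ?_⟩))))
        rw [e1] at hw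
        rw [eq_div_iff (ne_of_gt hq11p)]
        linarith
      · exact Or.inr (Or.inr (Or.inl ⟨e1, c3 hw⟩))
    · rcases lt_trichotomy (s1 * (1 - q11) + s2 * q11) qs with hw | hw | hw
      · have e2 : s2 = 0 := c4 hw
        refine Or.inr (Or.inr (Or.inr (Or.inr (Or.inr (Or.inr (Or.inr (Or.inr ⟨⟨?_, e2⟩, ?_⟩)))))))
        · rw [e2] at hu
          rw [eq_div_iff (ne_of_gt hA)]
          linarith
        · rw [e2] at hu
          nlinarith [hv1.2]
      · have hd : (s1 - s2) * (q11 - q10) = 0 := by linear_combination hu - hw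
        have hss : s1 = s2 := by
          rcases mul_eq_zero.mp hd with h | h
          · linarith [sub_eq_zero.mp h]
          · exfalso; linarith [sub_eq_zero.mp h]
        refine Or.inr (Or.inr (Or.inr (Or.inl ⟨?_, ?_⟩)))
        · rw [hss] at hu; nlinarith
        · rw [hss] at hu; nlinarith
      · have e2 : s2 = 1 := c3 hw
        refine Or.inr (Or.inr (Or.inr (Or.inr (Or.inr (Or.inl ⟨?_, e2⟩)))))
        rw [e2] at hu
        rw [eq_div_iff (ne_of_gt hA)]
        linarith
    · have e1 : s1 = 1 := c1 hu
      rcases lt_trichotomy (s1 * (1 - q11) + s2 * q11) qs with hw | hw | hw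
      · have e2 : s2 = 0 := c4 hw
        refine Or.inr (Or.inr (Or.inr (Or.inr (Or.inr (Or.inr (Or.inl ⟨⟨e1, e2⟩, ?_, ?_⟩))))))
        · rw [e1, e2] at hw; linarith
        · rw [e1, e2] at hu; linarith
      · refine Or.inr (Or.inr (Or.inr (Or.inr (Or.inr (Or.inr (Or.inr (Or.inl ⟨⟨e1, ?_⟩, ?_⟩)))))))
        · rw [e1] at hw
          rw [eq_div_iff (ne_of_gt hq11p)]
          linarith
        · rw [e1] at hw
          nlinarith [hv2.1]
      · exact Or.inr (Or.inl ⟨e1, c3 hw⟩)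
  · intro h
    rcases h with h | h | h | h | h | h | ⟨h, h1, h2⟩ | ⟨h, h1⟩ | ⟨h, h1⟩ <;>
      rw [Prod.mk.injEq] at h <;> obtain ⟨e1, e2⟩ := h <;> subst e1 <;> subst e2 <;>
      simp only [SymCond, ValidStrat, qhat0, qhat1, Set.mem_Icc]
    · -- (0,0)
      refine ⟨⟨⟨le_refl 0, zero_le_one⟩, ⟨le_refl 0, zero_le_one⟩⟩, ?_, ?_, ?_, ?_⟩ <;>
        intro hh
      · exfalso; nlinarith
      · trivial
      · exfalso; nlinarith
      · trivial
    · -- (1,1)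
      refine ⟨⟨⟨zero_le_one, le_refl 1⟩, ⟨zero_le_one, le_refl 1⟩⟩, ?_, ?_, ?_, ?_⟩ <;>
        intro hh
      · trivial
      · exfalso; nlinarith
      · trivial
      · exfalso; nlinarith
    · -- (0,1)
      refine ⟨⟨⟨le_refl 0, zero_le_one⟩, ⟨zero_le_one, le_refl 1⟩⟩, ?_, ?_, ?_, ?_⟩ <;>
        intro hh
      · exfalso; nlinarith
      · trivial
      · trivial
      · exfalso; nlinarith
    · -- (qs,qs)
      refine ⟨⟨⟨hqsp.le, hqs1.le⟩, ⟨hqsp.le, hqs1.le⟩⟩, ?_, ?_, ?_, ?_⟩ <;>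
        intro hh <;> exfalso <;> nlinarith
    · -- (0, qs/q11)
      have hv : qs / q11 * q11 = qs := div_mul_cancel₀ qs (ne_of_gt hq11p)
      have hu : qs / q11 * q10 < qs := by
        rw [div_mul_eq_mul_div, div_lt_iff₀ hq11p]
        nlinarith
      refine ⟨⟨⟨le_refl 0, zero_le_one⟩,
        ⟨div_nonneg hqsp.le hq11p.le, by rw [div_le_one hq11p]; linarith⟩⟩, ?_, ?_, ?_, ?_⟩ <;>
        intro hh
      · exfalso; nlinarith
      · trivial
      · exfalso; nlinarith
      · exfalso; nlinarith
    · -- ((qs-q10)/(1-q10), 1)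
      have hu : (qs - q10) / (1 - q10) * (1 - q10) + 1 * q10 = qs := by
        rw [div_mul_cancel₀ _ (ne_of_gt hA)]; ring
      have hv : qs < (qs - q10) / (1 - q10) * (1 - q11) + 1 * q11 := by
        have key : (qs - q10) / (1 - q10) * (1 - q11) + 1 * q11 - qs
            = (q11 - q10) * (1 - qs) / (1 - q10) := by
          field_simp
          ring
        have : 0 < (q11 - q10) * (1 - qs) / (1 - q10) :=
          div_pos (mul_pos (by linarith) (by linarith)) hA
        linarith
      refine ⟨⟨⟨div_nonneg (by linarith) hA.le, by rw [div_le_one hA]; linarith⟩,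
        ⟨zero_le_one, le_refl 1⟩⟩, ?_, ?_, ?_, ?_⟩ <;> intro hh
      · exfalso; nlinarith
      · exfalso; nlinarith
      · trivial
      · exfalso; nlinarith
    · -- (1,0) with 1-q11 ≤ qs ≤ 1-q10
      refine ⟨⟨⟨zero_le_one, le_refl 1⟩, ⟨le_refl 0, zero_le_one⟩⟩, ?_, ?_, ?_, ?_⟩ <;>
        intro hh
      · trivial
      · exfalso; nlinarith
      · exfalso; nlinarith
      · trivial
    · -- (1, (qs-(1-q11))/q11) with 1-q11 ≤ qs
      have hv : 1 * (1 - q11) + (qs - (1 - q11)) / q11 * q11 = qs := by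
        rw [div_mul_cancel₀ _ (ne_of_gt hq11p)]; ring
      have hu : qs < 1 * (1 - q10) + (qs - (1 - q11)) / q11 * q10 := by
        have key : 1 * (1 - q10) + (qs - (1 - q11)) / q11 * q10 - qs
            = (1 - qs) * (q11 - q10) / q11 := by
          field_simp
          ring
        have : 0 < (1 - qs) * (q11 - q10) / q11 :=
          div_pos (mul_pos (by linarith) (by linarith)) hq11p
        linarith
      refine ⟨⟨⟨zero_le_one, le_refl 1⟩,
        ⟨div_nonneg (by linarith) hq11p.le, by rw [div_le_one hq11p]; linarith⟩⟩,
        ?_, ?_, ?_, ?_⟩ <;> intro hh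
      · trivial
      · exfalso; nlinarith
      · exfalso; nlinarith
      · exfalso; nlinarith
    · -- (qs/(1-q10), 0) with qs ≤ 1-q10
      have hu : qs / (1 - q10) * (1 - q10) + 0 * q10 = qs := by
        rw [div_mul_cancel₀ _ (ne_of_gt hA)]; ring
      have hv : qs / (1 - q10) * (1 - q11) + 0 * q11 < qs := by
        rw [zero_mul, add_zero, div_mul_eq_mul_div, div_lt_iff₀ hA]
        nlinarith
      refine ⟨⟨⟨div_nonneg hqsp.le hA.le, by rw [div_le_one hA]; linarith⟩,
        ⟨le_refl 0, zero_le_one⟩⟩, ?_, ?_, ?_, ?_⟩ <;> intro hh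
      · exfalso; nlinarith
      · exfalso; nlinarith
      · exfalso; nlinarith
      · trivial


lemma strat_eq {a b : ℝ} (ha : 0 < a) (hab : a < b) {s t : ℝ × ℝ}
    (hx : qhat0 a s = qhat0 a t) (hy : qhat1 b s = qhat1 b t) : s = t := by
  simp only [qhat0, qhat1] at hx hy
  have e1 : (s.1 - t.1) * (b - a) = 0 := by linear_combination b * hx - a * hy
  have h1 : s.1 = t.1 := by
    rcases mul_eq_zero.mp e1 with h | h
    · exact sub_eq_zero.mp h
    · exfalso; have := sub_eq_zero.mp h; linarith
  have e2 : (s.2 - t.2) * a = 0 := by linear_combination hx - (1 - a) * h1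
  have h2 : s.2 = t.2 := by
    rcases mul_eq_zero.mp e2 with h | h
    · exact sub_eq_zero.mp h
    · exfalso; linarith
  exact Prod.ext h1 h2

end PPAux

/-- **Equilibrium characterization (Theorem 4.1).**  In the binary peer-prediction model with
break-even point `q*`, every equilibrium is symmetric, and a profile is an equilibrium iff it
is the symmetric profile where every agent plays one of:
`(0,0)`, `(1,1)`, `(0,1)` (truth-telling), `(q*,q*)`, `(0, q*/q11)`, `((q*−q10)/q00, 1)`;
additionally `(1,0)` (lying) iff `q01 ≤ q* ≤ q00`, `(1, (q*−q01)/q11)` iff `q01 ≤ q*`,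
and `(q*/q00, 0)` iff `q* ≤ q00`  (here `q01 = 1 − q11`, `q00 = 1 − q10`). -/
theorem equilibrium_characterization (n : ℕ) (hn : 2 ≤ n) (q10 q11 : ℝ)
    (hq10 : 0 < q10) (hcorr : q10 < q11) (hq11 : q11 < 1)
    (ℓ0 ℓ1 : ℝ → ℝ) (haff0 : IsAffineFn ℓ0) (haff1 : IsAffineFn ℓ1)
    (hproper0 : ℓ0 q10 > ℓ1 q10) (hproper1 : ℓ1 q11 > ℓ0 q11)
    (qs : ℝ) (hqs : qs ∈ Set.Ioo q10 q11) (hbe : ℓ0 qs = ℓ1 qs)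
    (θ : Fin n → ℝ × ℝ) :
    IsEquilibrium n q10 q11 ℓ0 ℓ1 θ ↔
      ∃ s : ℝ × ℝ, (∀ i, θ i = s) ∧
        (s = (0, 0) ∨ s = (1, 1) ∨ s = (0, 1) ∨ s = (qs, qs) ∨
          s = (0, qs / q11) ∨ s = ((qs - q10) / (1 - q10), 1) ∨
          (s = (1, 0) ∧ 1 - q11 ≤ qs ∧ qs ≤ 1 - q10) ∨
          (s = (1, (qs - (1 - q11)) / q11) ∧ 1 - q11 ≤ qs) ∨
          (s = (qs / (1 - q10), 0) ∧ qs ≤ 1 - q10)) := by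
  have hqsl : q10 < qs := hqs.1
  have hqsr : qs < q11 := hqs.2
  have hnpos : (0:ℝ) < (n:ℝ) - 1 := by
    have : (2:ℝ) ≤ (n:ℝ) := by exact_mod_cast hn
    linarith
  rw [PPAux.equil_iff hn hq10 hcorr hq11 ℓ0 ℓ1 haff0 haff1 hproper0 hproper1 hqs hbe θ]
  have hsum : ∀ (g : Fin n → ℝ) (c : ℝ), (∀ j, g j = c) → ∀ i : Fin n,
      ∑ j ∈ univ.erase i, g j = ((n:ℝ)-1) * c := by
    intro g c hg i
    rw [Finset.sum_congr rfl (fun j _ => hg j), Finset.sum_const, nsmul_eq_mul,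
      PPAux.card_erase_real hn i]
  unfold PPAux.EqCond
  constructor
  · rintro ⟨hvalid, hcond⟩
    have hxc := PPAux.x_const hn hq10 hcorr hq11 θ hvalid
      (fun i => (hcond i).1) (fun i => (hcond i).2.1)
      (fun i => (hcond i).2.2.1) (fun i => (hcond i).2.2.2)
    have sw0 : ∀ u : ℝ × ℝ, qhat0 (1-q11) (u.2, u.1) = qhat1 q11 u := by
      intro u; simp only [qhat0, qhat1]; ring
    have sw1 : ∀ u : ℝ × ℝ, qhat1 (1-q10) (u.2, u.1) = qhat0 q10 u := by
      intro u; simp only [qhat0, qhat1]; ring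
    have hyc : ∀ i j, qhat1 q11 (θ i) = qhat1 q11 (θ j) := by
      have h := PPAux.x_const (t := qs) (a := 1-q11) (b := 1-q10) hn
        (by linarith) (by linarith) (by linarith)
        (fun i => ((θ i).2, (θ i).1))
        (fun i => ⟨(hvalid i).2, (hvalid i).1⟩)
        (fun i hi => (hcond i).2.2.1 (by
          rwa [Finset.sum_congr rfl (fun j _ => sw0 (θ j))] at hi))
        (fun i hi => (hcond i).2.2.2 (by
          rwa [Finset.sum_congr rfl (fun j _ => sw0 (θ j))] at hi))
        (fun i hi => (hcond i).1 (by
          rwa [Finset.sum_congr rfl (fun j _ => sw1 (θ j))] at hi))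
        (fun i hi => (hcond i).2.1 (by
          rwa [Finset.sum_congr rfl (fun j _ => sw1 (θ j))] at hi))
      intro i j
      have h2 := h i j
      rwa [sw0 (θ i), sw0 (θ j)] at h2
    have hall : ∀ i j, θ i = θ j := fun i j =>
      PPAux.strat_eq hq10 hcorr (hxc i j) (hyc i j)
    refine ⟨θ ⟨0, by omega⟩, fun i => hall i ⟨0, by omega⟩, ?_⟩
    apply (PPAux.classify hq10 hqsl hqsr hq11 (θ ⟨0, by omega⟩)).mp
    have e0 := hsum (fun j => qhat0 q10 (θ j)) (qhat0 q10 (θ ⟨0, by omega⟩))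
      (fun j => congrArg (qhat0 q10) (hall j ⟨0, by omega⟩)) ⟨0, by omega⟩
    have e1 := hsum (fun j => qhat1 q11 (θ j)) (qhat1 q11 (θ ⟨0, by omega⟩))
      (fun j => congrArg (qhat1 q11) (hall j ⟨0, by omega⟩)) ⟨0, by omega⟩
    obtain ⟨c1, c2, c3, c4⟩ := hcond ⟨0, by omega⟩
    refine ⟨hvalid _, ?_, ?_, ?_, ?_⟩
    · intro h; exact c1 (by rw [e0]; exact (mul_lt_mul_iff_right₀ hnpos).mpr h)
    · intro h; exact c2 (by rw [e0]; exact (mul_lt_mul_iff_right₀ hnpos).mpr h)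
    · intro h; exact c3 (by rw [e1]; exact (mul_lt_mul_iff_right₀ hnpos).mpr h)
    · intro h; exact c4 (by rw [e1]; exact (mul_lt_mul_iff_right₀ hnpos).mpr h)
  · rintro ⟨s, hsame, hlist⟩
    obtain ⟨hvS, c1, c2, c3, c4⟩ := (PPAux.classify hq10 hqsl hqsr hq11 s).mpr hlist
    refine ⟨fun i => by rw [hsame i]; exact hvS, ?_⟩
    intro i
    have e0 := hsum (fun j => qhat0 q10 (θ j)) (qhat0 q10 s)
      (fun j => congrArg (qhat0 q10) (hsame j)) i
    have e1 := hsum (fun j => qhat1 q11 (θ j)) (qhat1 q11 s)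
      (fun j => congrArg (qhat1 q11) (hsame j)) i
    refine ⟨?_, ?_, ?_, ?_⟩
    · intro h; rw [hsame i]
      exact c1 ((mul_lt_mul_iff_right₀ hnpos).mp (by rw [← e0]; exact h))
    · intro h; rw [hsame i]
      exact c2 ((mul_lt_mul_iff_right₀ hnpos).mp (by rw [← e0]; exact h))
    · intro h; rw [hsame i]
      exact c3 ((mul_lt_mul_iff_right₀ hnpos).mp (by rw [← e1]; exact h))
    · intro h; rw [hsame i]
      exact c4 ((mul_lt_mul_iff_right₀ hnpos).mp (by rw [← e1]; exact h))
end
end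

section
/- In the binary peer-prediction model with break-even point q*: (a) if q01 ≤ q* ≤ q00, then the nine symmetric profiles given by the strategies (0,0), (1,1), (0,1), (1,0), (0, q*/q11), ((q*−q10)/q00, 1), (q*/q00, 0), (1, (q*−q01)/q11) and (q*, q*) are all equilibria; (b) if q00 < q*, then the seven symmetric profiles given by (0,0), (1,1), (0,1), (0, q*/q11), ((q*−q10)/q00, 1), (1, (q*−q01)/q11) and (q*, q*) are all equilibria; (c) if q* < q01, then the seven symmetric profiles given by (0,0), (1,1), (0,1), (0, q*/q11), ((q*−q10)/q00, 1), (q*/q00, 0) and (q*, q*) are all equilibria. -/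
open Finset

noncomputable section

/-! If the other agents all play `s`, write `x_b` for the probability that a peer reports `1`
given one's signal `b`. Affineness and the break-even point give `ℓ(x,1) − ℓ(x,0) = c·(x − q*)`
with `c > 0`, so up to terms independent of her own strategy `θ` an agent earns
`c·(q0·θ(1|0)·(x_0 − q*) + q1·θ(1|1)·(x_1 − q*))`. Hence the symmetric profile `s` is an
equilibrium as soon as each coordinate of `s` is `0` where `x_b ≤ q*`, `1` where `x_b ≥ q*`, and
arbitrary where `x_b = q*`. Each listed strategy meets these conditions: its mixed coordinate
solves `x_b = q*`, and `x_1 − x_0 = (θ(1|1) − θ(1|0))·(q11 − q10)`. -/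

theorem IsAffineFn.sub_s3 {f g : ℝ → ℝ} (hf : IsAffineFn f) (hg : IsAffineFn g) :
    IsAffineFn (f - g) := by
  obtain ⟨a, b, hab⟩ := hf
  obtain ⟨a', b', hab'⟩ := hg
  exact ⟨a - a', b - b', fun x => by simp only [Pi.sub_apply, hab, hab']; ring⟩

theorem IsAffineFn.exists_pos_mul_sub {f : ℝ → ℝ} (hf : IsAffineFn f) {p r : ℝ} (hpr : p < r)
    (hp : f p < 0) (hr : f r = 0) : ∃ c > 0, ∀ x, f x = c * (x - r) := by
  obtain ⟨a, b, hab⟩ := hf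
  rw [hab] at hp hr
  refine ⟨a, ?_, fun x => by rw [hab]; linarith⟩
  nlinarith

theorem signal_one_prob_mem_Icc {q10 q11 : ℝ} (hq10 : 0 ≤ q10) (hq11 : q11 ≤ 1) :
    q10 / (1 - q11 + q10) ∈ Set.Icc (0 : ℝ) 1 :=
  ⟨div_nonneg hq10 (by linarith), div_le_one_of_le₀ (by linarith) (by linarith)⟩

theorem qhat1_sub_qhat0 (q10 q11 : ℝ) (s : ℝ × ℝ) :
    qhat1 q11 s - qhat0 q10 s = (s.2 - s.1) * (q11 - q10) := by
  simp only [qhat0, qhat1]; ring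

theorem qhat0_le_qhat1 {q10 q11 : ℝ} (hq : q10 ≤ q11) {s : ℝ × ℝ} (hs : s.1 ≤ s.2) :
    qhat0 q10 s ≤ qhat1 q11 s := by
  nlinarith [qhat1_sub_qhat0 q10 q11 s]

theorem qhat1_le_qhat0 {q10 q11 : ℝ} (hq : q10 ≤ q11) {s : ℝ × ℝ} (hs : s.2 ≤ s.1) :
    qhat1 q11 s ≤ qhat0 q10 s := by
  nlinarith [qhat1_sub_qhat0 q10 q11 s]

theorem payoff_of_forall_ne_eq {n : ℕ} (hn : 2 ≤ n) (q10 q11 : ℝ) (ℓ0 ℓ1 : ℝ → ℝ)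
    {θ : Fin n → ℝ × ℝ} {i : Fin n} {s : ℝ × ℝ} (hθ : ∀ j, j ≠ i → θ j = s) :
    payoff n q10 q11 ℓ0 ℓ1 θ i =
      (1 - q10 / (1 - q11 + q10)) *
        (ℓ0 (qhat0 q10 s) + (θ i).1 * (ℓ1 (qhat0 q10 s) - ℓ0 (qhat0 q10 s)))
      + q10 / (1 - q11 + q10) *
        (ℓ0 (qhat1 q11 s) + (θ i).2 * (ℓ1 (qhat1 q11 s) - ℓ0 (qhat1 q11 s))) := by
  have hn' : ((n : ℝ) - 1) ≠ 0 := by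
    have : (2 : ℝ) ≤ n := by exact_mod_cast hn
    linarith
  have hsum (f : ℝ × ℝ → ℝ) : ((n : ℝ) - 1)⁻¹ * ∑ j ∈ univ.erase i, f (θ j) = f s := by
    rw [sum_congr rfl fun j hj => by rw [hθ j (mem_erase.1 hj).1], sum_const,
      card_erase_of_mem (mem_univ i), card_univ, Fintype.card_fin, nsmul_eq_mul,
      Nat.cast_pred (by omega), inv_mul_cancel_left₀ hn']
  unfold payoff
  rw [hsum fun p => ℓ0 (qhat0 q10 p), hsum fun p => ℓ1 (qhat0 q10 p),
    hsum fun p => ℓ0 (qhat1 q11 p), hsum fun p => ℓ1 (qhat1 q11 p)]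
  ring

/-- Reporting `1` with probability `t` when a peer reports `1` with probability `x` gains
`t·(x − q*)` up to a positive factor. -/
def IsBestReply (qs x a : ℝ) : Prop := ∀ t ∈ Set.Icc (0 : ℝ) 1, t * (x - qs) ≤ a * (x - qs)

theorem isBestReply_zero {qs x : ℝ} (h : x ≤ qs) : IsBestReply qs x 0 :=
  fun _ ht => by nlinarith [ht.1]

theorem isBestReply_one {qs x : ℝ} (h : qs ≤ x) : IsBestReply qs x 1 :=
  fun _ ht => by nlinarith [ht.2]

theorem isBestReply_of_eq {qs x : ℝ} (h : x = qs) (a : ℝ) : IsBestReply qs x a :=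
  fun _ _ => by simp [h]

def IsSelfBestReply (q10 q11 qs : ℝ) (s : ℝ × ℝ) : Prop :=
  ValidStrat s ∧ IsBestReply qs (qhat0 q10 s) s.1 ∧ IsBestReply qs (qhat1 q11 s) s.2

theorem isEquilibrium_const_of_isSelfBestReply {n : ℕ} (hn : 2 ≤ n) {q10 q11 : ℝ}
    (hq10 : 0 ≤ q10) (hq11 : q11 ≤ 1) {ℓ0 ℓ1 : ℝ → ℝ} {c qs : ℝ} (hc : 0 < c)
    (hgain : ∀ x, ℓ1 x - ℓ0 x = c * (x - qs)) {s : ℝ × ℝ}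
    (hs : IsSelfBestReply q10 q11 qs s) : IsEquilibrium n q10 q11 ℓ0 ℓ1 (fun _ => s) := by
  obtain ⟨hvalid, hreply0, hreply1⟩ := hs
  obtain ⟨hQ0, hQ1⟩ := signal_one_prob_mem_Icc hq10 hq11
  refine ⟨fun _ => hvalid, fun i t ht => ?_⟩
  rw [payoff_of_forall_ne_eq hn q10 q11 ℓ0 ℓ1 (fun _ _ => rfl),
    payoff_of_forall_ne_eq hn q10 q11 ℓ0 ℓ1 (fun j hj => Function.update_of_ne hj t fun _ => s),
    Function.update_self, hgain, hgain]
  have h0 := mul_le_mul_of_nonneg_left (hreply0 t.1 ht.1) (mul_nonneg (sub_nonneg.2 hQ1) hc.le)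
  have h1 := mul_le_mul_of_nonneg_left (hreply1 t.2 ht.2) (mul_nonneg hQ0 hc.le)
  linarith

section SelfBestReplies

variable {q10 q11 qs : ℝ}

theorem isSelfBestReply_zero_zero (hqs : 0 ≤ qs) : IsSelfBestReply q10 q11 qs (0, 0) :=
  ⟨⟨⟨le_rfl, zero_le_one⟩, ⟨le_rfl, zero_le_one⟩⟩,
    isBestReply_zero (by simpa [qhat0]), isBestReply_zero (by simpa [qhat1])⟩

theorem isSelfBestReply_one_one (hqs : qs ≤ 1) : IsSelfBestReply q10 q11 qs (1, 1) :=
  ⟨⟨⟨zero_le_one, le_rfl⟩, ⟨zero_le_one, le_rfl⟩⟩,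
    isBestReply_one (by simpa [qhat0]), isBestReply_one (by simpa [qhat1])⟩

theorem isSelfBestReply_zero_one (h10 : q10 ≤ qs) (h11 : qs ≤ q11) :
    IsSelfBestReply q10 q11 qs (0, 1) :=
  ⟨⟨⟨le_rfl, zero_le_one⟩, ⟨zero_le_one, le_rfl⟩⟩,
    isBestReply_zero (by simpa [qhat0]), isBestReply_one (by simpa [qhat1])⟩

theorem isSelfBestReply_one_zero (h00 : qs ≤ 1 - q10) (h01 : 1 - q11 ≤ qs) :
    IsSelfBestReply q10 q11 qs (1, 0) :=
  ⟨⟨⟨zero_le_one, le_rfl⟩, ⟨le_rfl, zero_le_one⟩⟩,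
    isBestReply_one (by simp only [qhat0]; linarith),
    isBestReply_zero (by simp only [qhat1]; linarith)⟩

theorem isSelfBestReply_zero_mixed (hq : q10 ≤ q11) (hq11 : 0 < q11) (hqs : 0 ≤ qs)
    (hqs11 : qs ≤ q11) : IsSelfBestReply q10 q11 qs (0, qs / q11) := by
  have hx1 : qhat1 q11 (0, qs / q11) = qs := by simp only [qhat1]; field_simp; ring
  have hmixed : qs / q11 ∈ Set.Icc (0 : ℝ) 1 :=
    ⟨div_nonneg hqs hq11.le, div_le_one_of_le₀ hqs11 hq11.le⟩
  exact ⟨⟨⟨le_rfl, zero_le_one⟩, hmixed⟩,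
    isBestReply_zero ((qhat0_le_qhat1 hq hmixed.1).trans_eq hx1), isBestReply_of_eq hx1 _⟩

theorem isSelfBestReply_mixed_one (hq : q10 ≤ q11) (hq10 : q10 < 1) (h10 : q10 ≤ qs)
    (hqs : qs ≤ 1) : IsSelfBestReply q10 q11 qs ((qs - q10) / (1 - q10), 1) := by
  have hx0 : qhat0 q10 ((qs - q10) / (1 - q10), 1) = qs := by
    simp only [qhat0]; field_simp [(sub_pos.2 hq10).ne']; ring
  have hmixed : (qs - q10) / (1 - q10) ∈ Set.Icc (0 : ℝ) 1 :=
    ⟨div_nonneg (by linarith) (by linarith), div_le_one_of_le₀ (by linarith) (by linarith)⟩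
  exact ⟨⟨hmixed, ⟨zero_le_one, le_rfl⟩⟩,
    isBestReply_of_eq hx0 _, isBestReply_one (hx0.symm.trans_le (qhat0_le_qhat1 hq hmixed.2))⟩

theorem isSelfBestReply_mixed_zero (hq : q10 ≤ q11) (hq10 : q10 < 1) (hqs : 0 ≤ qs)
    (h00 : qs ≤ 1 - q10) : IsSelfBestReply q10 q11 qs (qs / (1 - q10), 0) := by
  have hx0 : qhat0 q10 (qs / (1 - q10), 0) = qs := by
    simp only [qhat0]; field_simp [(sub_pos.2 hq10).ne']; ring
  have hmixed : qs / (1 - q10) ∈ Set.Icc (0 : ℝ) 1 :=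
    ⟨div_nonneg hqs (by linarith), div_le_one_of_le₀ h00 (by linarith)⟩
  exact ⟨⟨hmixed, ⟨le_rfl, zero_le_one⟩⟩,
    isBestReply_of_eq hx0 _, isBestReply_zero ((qhat1_le_qhat0 hq hmixed.1).trans_eq hx0)⟩

theorem isSelfBestReply_one_mixed (hq : q10 ≤ q11) (hq11 : 0 < q11) (h01 : 1 - q11 ≤ qs)
    (hqs : qs ≤ 1) : IsSelfBestReply q10 q11 qs (1, (qs - (1 - q11)) / q11) := by
  have hx1 : qhat1 q11 (1, (qs - (1 - q11)) / q11) = qs := by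
    simp only [qhat1]; field_simp; ring
  have hmixed : (qs - (1 - q11)) / q11 ∈ Set.Icc (0 : ℝ) 1 :=
    ⟨div_nonneg (by linarith) hq11.le, div_le_one_of_le₀ (by linarith) hq11.le⟩
  exact ⟨⟨⟨zero_le_one, le_rfl⟩, hmixed⟩,
    isBestReply_one (hx1.symm.trans_le (qhat1_le_qhat0 hq hmixed.2)), isBestReply_of_eq hx1 _⟩

theorem isSelfBestReply_breakEven (hqs : qs ∈ Set.Icc (0 : ℝ) 1) :
    IsSelfBestReply q10 q11 qs (qs, qs) :=
  ⟨⟨hqs, hqs⟩, isBestReply_of_eq (by simp only [qhat0]; ring) _,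
    isBestReply_of_eq (by simp only [qhat1]; ring) _⟩

end SelfBestReplies

theorem symmetric_equilibria_exist_general (n : ℕ) (hn : 2 ≤ n) (q10 q11 : ℝ)
    (hq10 : 0 < q10) (hcorr : q10 < q11) (hq11 : q11 < 1)
    (ℓ0 ℓ1 : ℝ → ℝ) (haff0 : IsAffineFn ℓ0) (haff1 : IsAffineFn ℓ1)
    (hproper0 : ℓ0 q10 > ℓ1 q10)
    (qs : ℝ) (hqs : qs ∈ Set.Ioo q10 q11) (hbe : ℓ0 qs = ℓ1 qs) :
    (1 - q11 ≤ qs ∧ qs ≤ 1 - q10 →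
      ∀ s ∈ ({(0, 0), (1, 1), (0, 1), (1, 0), (0, qs / q11), ((qs - q10) / (1 - q10), 1),
          (qs / (1 - q10), 0), (1, (qs - (1 - q11)) / q11), (qs, qs)} : Set (ℝ × ℝ)),
        IsEquilibrium n q10 q11 ℓ0 ℓ1 (fun _ => s)) ∧
    (1 - q10 < qs →
      ∀ s ∈ ({(0, 0), (1, 1), (0, 1), (0, qs / q11), ((qs - q10) / (1 - q10), 1),
          (1, (qs - (1 - q11)) / q11), (qs, qs)} : Set (ℝ × ℝ)),
        IsEquilibrium n q10 q11 ℓ0 ℓ1 (fun _ => s)) ∧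
    (qs < 1 - q11 →
      ∀ s ∈ ({(0, 0), (1, 1), (0, 1), (0, qs / q11), ((qs - q10) / (1 - q10), 1),
          (qs / (1 - q10), 0), (qs, qs)} : Set (ℝ × ℝ)),
        IsEquilibrium n q10 q11 ℓ0 ℓ1 (fun _ => s)) := by
  obtain ⟨h10, h11⟩ := hqs
  obtain ⟨c, hc, hgain⟩ := (haff1.sub_s3 haff0).exists_pos_mul_sub h10
    (sub_neg.2 hproper0) (sub_eq_zero.2 hbe.symm)
  have equilibrium {s : ℝ × ℝ} (hs : IsSelfBestReply q10 q11 qs s) :=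
    isEquilibrium_const_of_isSelfBestReply hn hq10.le hq11.le hc hgain hs
  have hq := hcorr.le
  have E00 := equilibrium (isSelfBestReply_zero_zero (by linarith))
  have E11 := equilibrium (isSelfBestReply_one_one (by linarith))
  have E01 := equilibrium (isSelfBestReply_zero_one h10.le h11.le)
  have E0m := equilibrium (isSelfBestReply_zero_mixed hq (by linarith) (by linarith) h11.le)
  have Em1 := equilibrium (isSelfBestReply_mixed_one hq (by linarith) h10.le (by linarith))
  have Ess := equilibrium (isSelfBestReply_breakEven ⟨by linarith, by linarith⟩)
  have E10 h00 h01 := equilibrium (isSelfBestReply_one_zero h00 h01)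
  have Em0 h00 := equilibrium (isSelfBestReply_mixed_zero hq (by linarith) (by linarith) h00)
  have E1m h01 := equilibrium (isSelfBestReply_one_mixed hq (by linarith) h01 (by linarith))
  refine ⟨fun hcase s hs => ?_, fun hcase s hs => ?_, fun hcase s hs => ?_⟩ <;>
    simp only [Set.mem_insert_iff, Set.mem_singleton_iff] at hs
  · rcases hs with rfl | rfl | rfl | rfl | rfl | rfl | rfl | rfl | rfl
    exacts [E00, E11, E01, E10 hcase.2 hcase.1, E0m, Em1, Em0 hcase.2, E1m hcase.1, Ess]
  · rcases hs with rfl | rfl | rfl | rfl | rfl | rfl | rfl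
    exacts [E00, E11, E01, E0m, Em1, E1m (by linarith), Ess]
  · rcases hs with rfl | rfl | rfl | rfl | rfl | rfl | rfl
    exacts [E00, E11, E01, E0m, Em1, Em0 (by linarith), Ess]

/-- **Symmetric equilibria (Lemma 4.2).**  In the binary peer-prediction model with
break-even point `q*` (writing `q01 = 1 − q11`, `q00 = 1 − q10`):
(a) if `q01 ≤ q* ≤ q00`, then the nine listed symmetric profiles are all equilibria;
(b) if `q00 < q*`, then the seven listed symmetric profiles are all equilibria;
(c) if `q* < q01`, then the seven listed symmetric profiles are all equilibria. -/
theorem symmetric_equilibria_exist (n : ℕ) (hn : 2 ≤ n) (q10 q11 : ℝ)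
    (hq10 : 0 < q10) (hcorr : q10 < q11) (hq11 : q11 < 1)
    (ℓ0 ℓ1 : ℝ → ℝ) (haff0 : IsAffineFn ℓ0) (haff1 : IsAffineFn ℓ1)
    (hproper0 : ℓ0 q10 > ℓ1 q10) (hproper1 : ℓ1 q11 > ℓ0 q11)
    (qs : ℝ) (hqs : qs ∈ Set.Ioo q10 q11) (hbe : ℓ0 qs = ℓ1 qs) :
    (1 - q11 ≤ qs ∧ qs ≤ 1 - q10 →
      ∀ s ∈ ({(0, 0), (1, 1), (0, 1), (1, 0), (0, qs / q11), ((qs - q10) / (1 - q10), 1),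
          (qs / (1 - q10), 0), (1, (qs - (1 - q11)) / q11), (qs, qs)} : Set (ℝ × ℝ)),
        IsEquilibrium n q10 q11 ℓ0 ℓ1 (fun _ => s)) ∧
    (1 - q10 < qs →
      ∀ s ∈ ({(0, 0), (1, 1), (0, 1), (0, qs / q11), ((qs - q10) / (1 - q10), 1),
          (1, (qs - (1 - q11)) / q11), (qs, qs)} : Set (ℝ × ℝ)),
        IsEquilibrium n q10 q11 ℓ0 ℓ1 (fun _ => s)) ∧
    (qs < 1 - q11 →
      ∀ s ∈ ({(0, 0), (1, 1), (0, 1), (0, qs / q11), ((qs - q10) / (1 - q10), 1),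
          (qs / (1 - q10), 0), (qs, qs)} : Set (ℝ × ℝ)),
        IsEquilibrium n q10 q11 ℓ0 ℓ1 (fun _ => s)) :=
  symmetric_equilibria_exist_general n hn q10 q11 hq10 hcorr hq11 ℓ0 ℓ1 haff0 haff1 hproper0 qs hqs
    hbe
end
end

section
/- In the binary peer-prediction model with break-even point q*, there are no asymmetric equilibria: if (θ_1, …, θ_n) is an equilibrium, then θ_i = θ_j for all agents i, j. -/
open Finset

noncomputable section

/-- The payoff of agent `i` after she deviates to `s`: the opponents' sums are unchanged,
and the coefficients come from `s`. -/
lemma payoff_update (n : ℕ) (q10 q11 : ℝ) (ℓ0 ℓ1 : ℝ → ℝ) (θ : Fin n → ℝ × ℝ)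
    (i : Fin n) (s : ℝ × ℝ) :
    payoff n q10 q11 ℓ0 ℓ1 (Function.update θ i s) i =
      (1 - q10 / (1 - q11 + q10)) *
          ((1 - s.1) * (((n : ℝ) - 1)⁻¹ * ∑ j ∈ univ.erase i, ℓ0 (qhat0 q10 (θ j)))
            + s.1 * (((n : ℝ) - 1)⁻¹ * ∑ j ∈ univ.erase i, ℓ1 (qhat0 q10 (θ j))))
        + (q10 / (1 - q11 + q10)) *
          ((1 - s.2) * (((n : ℝ) - 1)⁻¹ * ∑ j ∈ univ.erase i, ℓ0 (qhat1 q11 (θ j)))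
            + s.2 * (((n : ℝ) - 1)⁻¹ * ∑ j ∈ univ.erase i, ℓ1 (qhat1 q11 (θ j)))) := by
  have h : ∀ f : ℝ × ℝ → ℝ, ∑ j ∈ univ.erase i, f (Function.update θ i s j)
      = ∑ j ∈ univ.erase i, f (θ j) :=
    fun f => Finset.sum_congr rfl fun j hj => by
      rw [Function.update_of_ne (Finset.ne_of_mem_erase hj)]
  simp only [payoff, Function.update_self, h (fun p => ℓ0 (qhat0 q10 p)),
    h (fun p => ℓ1 (qhat0 q10 p)), h (fun p => ℓ0 (qhat1 q11 p)),
    h (fun p => ℓ1 (qhat1 q11 p))]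

set_option maxHeartbeats 1000000 in
/-- **No asymmetric equilibria (Lemma 4.4).**  In the binary peer-prediction model with
break-even point `q*`, every equilibrium is symmetric: all agents play the same strategy. -/
theorem no_asymmetric_equilibria (n : ℕ) (hn : 2 ≤ n) (q10 q11 : ℝ)
    (hq10 : 0 < q10) (hcorr : q10 < q11) (hq11 : q11 < 1)
    (ℓ0 ℓ1 : ℝ → ℝ) (haff0 : IsAffineFn ℓ0) (haff1 : IsAffineFn ℓ1)
    (hproper0 : ℓ0 q10 > ℓ1 q10) (hproper1 : ℓ1 q11 > ℓ0 q11)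
    (qs : ℝ) (hqs : qs ∈ Set.Ioo q10 q11) (hbe : ℓ0 qs = ℓ1 qs)
    (θ : Fin n → ℝ × ℝ) (heq : IsEquilibrium n q10 q11 ℓ0 ℓ1 θ) :
    ∀ i j : Fin n, θ i = θ j := by
  have hnR : (2 : ℝ) ≤ (n : ℝ) := by exact_mod_cast hn
  have hden : 0 < 1 - q11 + q10 := by linarith
  have hq1v : 0 < q10 / (1 - q11 + q10) := div_pos hq10 hden
  have hq0v : 0 < 1 - q10 / (1 - q11 + q10) := by
    rw [sub_pos, div_lt_one hden]; linarith
  have hninv : 0 < ((n : ℝ) - 1)⁻¹ := inv_pos.mpr (by linarith)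
  obtain ⟨a0, b0, h0⟩ := haff0
  obtain ⟨a1, b1, h1⟩ := haff1
  have hdiff : ∀ x, ℓ1 x - ℓ0 x = (a1 - a0) * (x - qs) := by
    intro x
    linear_combination h1 x - h0 x - hbe + h0 qs - h1 qs
  have hc : 0 < a1 - a0 := by
    nlinarith [hdiff q10, hproper0, hqs.1]
  have hcard : ∀ i : Fin n, ((univ.erase i).card : ℝ) = (n : ℝ) - 1 := by
    intro i
    rw [Finset.card_erase_of_mem (mem_univ i), card_univ, Fintype.card_fin,
      Nat.cast_sub (by omega : 1 ≤ n)]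
    norm_num
  have hsumdiff0 : ∀ i : Fin n,
      (∑ j ∈ univ.erase i, ℓ1 (qhat0 q10 (θ j)))
        - (∑ j ∈ univ.erase i, ℓ0 (qhat0 q10 (θ j)))
      = (a1 - a0) * ((∑ j ∈ univ.erase i, qhat0 q10 (θ j)) - ((n : ℝ) - 1) * qs) := by
    intro i
    rw [← Finset.sum_sub_distrib]
    calc (∑ j ∈ univ.erase i, (ℓ1 (qhat0 q10 (θ j)) - ℓ0 (qhat0 q10 (θ j))))
        = ∑ j ∈ univ.erase i, ((a1 - a0) * qhat0 q10 (θ j) - (a1 - a0) * qs) :=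
          Finset.sum_congr rfl fun j _ => by rw [hdiff]; ring
      _ = (a1 - a0) * ((∑ j ∈ univ.erase i, qhat0 q10 (θ j)) - ((n : ℝ) - 1) * qs) := by
          rw [Finset.sum_sub_distrib, Finset.sum_const, ← Finset.mul_sum, nsmul_eq_mul,
            hcard i]; ring
  have hsumdiff1 : ∀ i : Fin n,
      (∑ j ∈ univ.erase i, ℓ1 (qhat1 q11 (θ j)))
        - (∑ j ∈ univ.erase i, ℓ0 (qhat1 q11 (θ j)))
      = (a1 - a0) * ((∑ j ∈ univ.erase i, qhat1 q11 (θ j)) - ((n : ℝ) - 1) * qs) := by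
    intro i
    rw [← Finset.sum_sub_distrib]
    calc (∑ j ∈ univ.erase i, (ℓ1 (qhat1 q11 (θ j)) - ℓ0 (qhat1 q11 (θ j))))
        = ∑ j ∈ univ.erase i, ((a1 - a0) * qhat1 q11 (θ j) - (a1 - a0) * qs) :=
          Finset.sum_congr rfl fun j _ => by rw [hdiff]; ring
      _ = (a1 - a0) * ((∑ j ∈ univ.erase i, qhat1 q11 (θ j)) - ((n : ℝ) - 1) * qs) := by
          rw [Finset.sum_sub_distrib, Finset.sum_const, ← Finset.mul_sum, nsmul_eq_mul,
            hcard i]; ring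
  have hself : ∀ i : Fin n, payoff n q10 q11 ℓ0 ℓ1 θ i
      = payoff n q10 q11 ℓ0 ℓ1 (Function.update θ i (θ i)) i := fun i => by
    rw [Function.update_eq_self]
  -- slope conditions, coordinate 1
  have cond0le : ∀ i : Fin n, (θ i).1 < 1 →
      (∑ j ∈ univ.erase i, qhat0 q10 (θ j)) ≤ ((n : ℝ) - 1) * qs := by
    intro i hi
    have h := heq.2 i (1, (θ i).2)
      ⟨Set.mem_Icc.mpr ⟨zero_le_one, le_refl 1⟩, (heq.1 i).2⟩
    rw [hself i, payoff_update, payoff_update] at h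
    dsimp only at h
    set SA := ∑ j ∈ univ.erase i, ℓ0 (qhat0 q10 (θ j)) with hSA
    set SB := ∑ j ∈ univ.erase i, ℓ1 (qhat0 q10 (θ j)) with hSB
    set SC := ∑ j ∈ univ.erase i, ℓ0 (qhat1 q11 (θ j)) with hSC
    set SD := ∑ j ∈ univ.erase i, ℓ1 (qhat1 q11 (θ j)) with hSD
    have hslope : (∑ j ∈ univ.erase i, ℓ1 (qhat0 q10 (θ j)))
        - (∑ j ∈ univ.erase i, ℓ0 (qhat0 q10 (θ j))) ≤ 0 := by
      nlinarith [h, mul_pos (mul_pos hq0v hninv) (sub_pos.mpr hi)]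
    rw [hsumdiff0 i] at hslope
    nlinarith [hslope, hc]
  have cond0ge : ∀ i : Fin n, 0 < (θ i).1 →
      ((n : ℝ) - 1) * qs ≤ ∑ j ∈ univ.erase i, qhat0 q10 (θ j) := by
    intro i hi
    have h := heq.2 i (0, (θ i).2)
      ⟨Set.mem_Icc.mpr ⟨le_refl 0, zero_le_one⟩, (heq.1 i).2⟩
    rw [hself i, payoff_update, payoff_update] at h
    dsimp only at h
    set SA := ∑ j ∈ univ.erase i, ℓ0 (qhat0 q10 (θ j)) with hSA
    set SB := ∑ j ∈ univ.erase i, ℓ1 (qhat0 q10 (θ j)) with hSB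
    set SC := ∑ j ∈ univ.erase i, ℓ0 (qhat1 q11 (θ j)) with hSC
    set SD := ∑ j ∈ univ.erase i, ℓ1 (qhat1 q11 (θ j)) with hSD
    have hslope : 0 ≤ (∑ j ∈ univ.erase i, ℓ1 (qhat0 q10 (θ j)))
        - (∑ j ∈ univ.erase i, ℓ0 (qhat0 q10 (θ j))) := by
      nlinarith [h, mul_pos (mul_pos hq0v hninv) hi]
    rw [hsumdiff0 i] at hslope
    nlinarith [hslope, hc]
  -- slope conditions, coordinate 2
  have cond1le : ∀ i : Fin n, (θ i).2 < 1 →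
      (∑ j ∈ univ.erase i, qhat1 q11 (θ j)) ≤ ((n : ℝ) - 1) * qs := by
    intro i hi
    have h := heq.2 i ((θ i).1, 1)
      ⟨(heq.1 i).1, Set.mem_Icc.mpr ⟨zero_le_one, le_refl 1⟩⟩
    rw [hself i, payoff_update, payoff_update] at h
    dsimp only at h
    set SA := ∑ j ∈ univ.erase i, ℓ0 (qhat0 q10 (θ j)) with hSA
    set SB := ∑ j ∈ univ.erase i, ℓ1 (qhat0 q10 (θ j)) with hSB
    set SC := ∑ j ∈ univ.erase i, ℓ0 (qhat1 q11 (θ j)) with hSC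
    set SD := ∑ j ∈ univ.erase i, ℓ1 (qhat1 q11 (θ j)) with hSD
    have hslope : (∑ j ∈ univ.erase i, ℓ1 (qhat1 q11 (θ j)))
        - (∑ j ∈ univ.erase i, ℓ0 (qhat1 q11 (θ j))) ≤ 0 := by
      nlinarith [h, mul_pos (mul_pos hq1v hninv) (sub_pos.mpr hi)]
    rw [hsumdiff1 i] at hslope
    nlinarith [hslope, hc]
  have cond1ge : ∀ i : Fin n, 0 < (θ i).2 →
      ((n : ℝ) - 1) * qs ≤ ∑ j ∈ univ.erase i, qhat1 q11 (θ j) := by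
    intro i hi
    have h := heq.2 i ((θ i).1, 0)
      ⟨(heq.1 i).1, Set.mem_Icc.mpr ⟨le_refl 0, zero_le_one⟩⟩
    rw [hself i, payoff_update, payoff_update] at h
    dsimp only at h
    set SA := ∑ j ∈ univ.erase i, ℓ0 (qhat0 q10 (θ j)) with hSA
    set SB := ∑ j ∈ univ.erase i, ℓ1 (qhat0 q10 (θ j)) with hSB
    set SC := ∑ j ∈ univ.erase i, ℓ0 (qhat1 q11 (θ j)) with hSC
    set SD := ∑ j ∈ univ.erase i, ℓ1 (qhat1 q11 (θ j)) with hSD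
    have hslope : 0 ≤ (∑ j ∈ univ.erase i, ℓ1 (qhat1 q11 (θ j)))
        - (∑ j ∈ univ.erase i, ℓ0 (qhat1 q11 (θ j))) := by
      nlinarith [h, mul_pos (mul_pos hq1v hninv) hi]
    rw [hsumdiff1 i] at hslope
    nlinarith [hslope, hc]
  have hSx : ∀ i : Fin n, ∑ j ∈ univ.erase i, qhat0 q10 (θ j)
      = (∑ j, qhat0 q10 (θ j)) - qhat0 q10 (θ i) :=
    fun i => Finset.sum_erase_eq_sub (mem_univ i)
  have hSy : ∀ i : Fin n, ∑ j ∈ univ.erase i, qhat1 q11 (θ j)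
      = (∑ j, qhat1 q11 (θ j)) - qhat1 q11 (θ i) :=
    fun i => Finset.sum_erase_eq_sub (mem_univ i)
  have pair0 : ∀ i j : Fin n, (θ i).1 < (θ j).1 →
      qhat0 q10 (θ j) ≤ qhat0 q10 (θ i) := by
    intro i j hij
    have h1 : (θ i).1 < 1 := lt_of_lt_of_le hij (heq.1 j).1.2
    have h2 : 0 < (θ j).1 := lt_of_le_of_lt (heq.1 i).1.1 hij
    have a := cond0le i h1
    have b := cond0ge j h2
    rw [hSx i] at a
    rw [hSx j] at b
    linarith
  have pair1 : ∀ i j : Fin n, (θ i).2 < (θ j).2 →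
      qhat1 q11 (θ j) ≤ qhat1 q11 (θ i) := by
    intro i j hij
    have h1 : (θ i).2 < 1 := lt_of_lt_of_le hij (heq.1 j).2.2
    have h2 : 0 < (θ j).2 := lt_of_le_of_lt (heq.1 i).2.1 hij
    have a := cond1le i h1
    have b := cond1ge j h2
    rw [hSy i] at a
    rw [hSy j] at b
    linarith
  have noneq1 : ∀ i j : Fin n, (θ i).1 < (θ j).1 → False := by
    intro i j hij
    have hx := pair0 i j hij
    simp only [qhat0] at hx
    have hd : (θ j).2 < (θ i).2 := by
      nlinarith [mul_pos (sub_pos.mpr hij) (by linarith : (0:ℝ) < 1 - q10)]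
    have hy := pair1 j i hd
    simp only [qhat1] at hy
    nlinarith [mul_le_mul_of_nonneg_right hx (le_of_lt (lt_trans hq10 hcorr)),
      mul_le_mul_of_nonneg_right hy (le_of_lt hq10),
      mul_pos (sub_pos.mpr hij) (sub_pos.mpr hcorr)]
  have noneq2 : ∀ i j : Fin n, (θ i).1 = (θ j).1 → (θ i).2 < (θ j).2 → False := by
    intro i j he hij
    have hy := pair1 i j hij
    simp only [qhat1] at hy
    nlinarith [mul_pos (sub_pos.mpr hij) (lt_trans hq10 hcorr), he, hy]
  intro i j
  have e1 : (θ i).1 = (θ j).1 := by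
    rcases lt_trichotomy (θ i).1 (θ j).1 with h | h | h
    · exact (noneq1 i j h).elim
    · exact h
    · exact (noneq1 j i h).elim
  have e2 : (θ i).2 = (θ j).2 := by
    rcases lt_trichotomy (θ i).2 (θ j).2 with h | h | h
    · exact (noneq2 i j e1 h).elim
    · exact h
    · exact (noneq2 j i e1.symm h).elim
  exact Prod.ext e1 e2
end
end

section
/- In the binary peer-prediction model with break-even point q*, let R be the convex hull in ℝ² of the four points (0,0), (1,1), (q10, q11), (q00, q01), and for each of the four closed quadrants determined by the point (q*, q*) (i.e., {x ≤ q*, y ≥ q*}, {x ≥ q*, y ≥ q*}, {x ≤ q*, y ≤ q*}, {x ≥ q*, y ≤ q*}) consider its intersection with the plane. If (θ_1, …, θ_n) is an equilibrium such that all the points q̂_i := (q̂_i(1|0), q̂_i(1|1)) lie in one common closed quadrant, and there is some agent j with q̂_j in the interior of R, then q̂_i = (q*, q*) for every agent i. -/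
open Finset Filter Topology

noncomputable section

lemma support_line_not_interior {S : Set (ℝ × ℝ)} {u v c : ℝ} (huv : u ≠ 0 ∨ v ≠ 0)
    (hS : ∀ p ∈ S, c ≤ u * p.1 + v * p.2) {p : ℝ × ℝ} (hp : u * p.1 + v * p.2 = c) :
    p ∉ interior S := by
  intro hmem
  have hcont : Continuous (fun t : ℝ => ((p.1 - t * u, p.2 - t * v) : ℝ × ℝ)) := by continuity
  have h0 : ((fun t : ℝ => ((p.1 - t * u, p.2 - t * v) : ℝ × ℝ)) 0) ∈ interior S := by
    simpa using hmem
  have hev : ∀ᶠ t in 𝓝 (0 : ℝ), ((p.1 - t * u, p.2 - t * v) : ℝ × ℝ) ∈ interior S :=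
    hcont.continuousAt.eventually_mem (isOpen_interior.mem_nhds h0)
  have hev' : ∀ᶠ t in 𝓝[>] (0:ℝ), ((p.1 - t * u, p.2 - t * v) : ℝ × ℝ) ∈ interior S :=
    hev.filter_mono nhdsWithin_le_nhds
  obtain ⟨t, htS, ht⟩ := (hev'.and eventually_mem_nhdsWithin).exists
  have h1 : c ≤ u * (p.1 - t * u) + v * (p.2 - t * v) := hS _ (interior_subset htS)
  have huv2 : 0 < u ^ 2 + v ^ 2 := by rcases huv with h | h <;> positivity
  have ht0 : (0:ℝ) < t := ht
  nlinarith

lemma halfplane_convex (u v c : ℝ) : Convex ℝ {p : ℝ × ℝ | c ≤ u * p.1 + v * p.2} := by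
  have h : IsLinearMap ℝ (fun p : ℝ × ℝ => u * p.1 + v * p.2) := by
    constructor
    · intro x y; simp [Prod.fst_add, Prod.snd_add]; ring
    · intro t x; simp [Prod.smul_fst, Prod.smul_snd, smul_eq_mul]; ring
  exact convex_halfSpace_ge h c


set_option maxHeartbeats 2000000 in
/-- **Interior points force the full-support equilibrium (Proposition 4.3).**
Let `R` be the convex hull of `(0,0)`, `(1,1)`, `(q10,q11)`, `(q00,q01)` in `ℝ²`.
If `θ` is an equilibrium all of whose induced report points
`q̂_i = (q̂_i(1|0), q̂_i(1|1))` lie in one common closed quadrant determined by `(q*,q*)`,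
and some agent `j` has `q̂_j` in the interior of `R`, then `q̂_i = (q*, q*)` for all `i`. -/
theorem interior_forces_qstar (n : ℕ) (hn : 2 ≤ n) (q10 q11 : ℝ)
    (hq10 : 0 < q10) (hcorr : q10 < q11) (hq11 : q11 < 1)
    (ℓ0 ℓ1 : ℝ → ℝ) (haff0 : IsAffineFn ℓ0) (haff1 : IsAffineFn ℓ1)
    (hproper0 : ℓ0 q10 > ℓ1 q10) (hproper1 : ℓ1 q11 > ℓ0 q11)
    (qs : ℝ) (hqs : qs ∈ Set.Ioo q10 q11) (hbe : ℓ0 qs = ℓ1 qs)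
    (θ : Fin n → ℝ × ℝ) (heq : IsEquilibrium n q10 q11 ℓ0 ℓ1 θ)
    (hquad : ∃ Q ∈ ({ {p : ℝ × ℝ | p.1 ≤ qs ∧ qs ≤ p.2}, {p : ℝ × ℝ | qs ≤ p.1 ∧ qs ≤ p.2},
        {p : ℝ × ℝ | p.1 ≤ qs ∧ p.2 ≤ qs}, {p : ℝ × ℝ | qs ≤ p.1 ∧ p.2 ≤ qs} } :
          Set (Set (ℝ × ℝ))),
      ∀ i, (qhat0 q10 (θ i), qhat1 q11 (θ i)) ∈ Q)
    (hint : ∃ j, (qhat0 q10 (θ j), qhat1 q11 (θ j)) ∈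
      interior (convexHull ℝ
        ({((0 : ℝ), (0 : ℝ)), ((1 : ℝ), (1 : ℝ)), (q10, q11), (1 - q10, 1 - q11)} :
          Set (ℝ × ℝ)))) :
    ∀ i, (qhat0 q10 (θ i), qhat1 q11 (θ i)) = (qs, qs) := by
  obtain ⟨hval, hbest⟩ := heq
  obtain ⟨a0, b0, hℓ0⟩ := haff0
  obtain ⟨a1, b1, hℓ1⟩ := haff1
  obtain ⟨hq10s, hqs11⟩ := hqs
  have hbe' : a0 * qs + b0 = a1 * qs + b1 := by rw [← hℓ0, ← hℓ1]; exact hbe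
  have hgdiff : ∀ x, ℓ1 x - ℓ0 x = (a1 - a0) * (x - qs) := by
    intro x; rw [hℓ0, hℓ1]; linear_combination -hbe'
  have ha : 0 < a1 - a0 := by
    have h := hgdiff q10
    nlinarith [hproper0]
  have hden : 0 < 1 - q11 + q10 := by linarith
  have hq1pos : 0 < q10 / (1 - q11 + q10) := by positivity
  have hq0pos : 0 < 1 - q10 / (1 - q11 + q10) := by
    have : q10 / (1 - q11 + q10) < 1 := by rw [div_lt_one hden]; linarith
    linarith
  have hn1 : (1:ℝ) ≤ (n:ℝ) - 1 := by
    have : (2:ℝ) ≤ (n:ℝ) := by exact_mod_cast hn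
    linarith
  have hcpos : 0 < ((n:ℝ) - 1)⁻¹ := inv_pos.2 (by linarith)
  -- indifference at interior strategies
  have hindiff : ∀ i : Fin n,
      (0 < (θ i).1 → (θ i).1 < 1 →
        ∑ k ∈ univ.erase i, (qhat0 q10 (θ k) - qs) = 0) ∧
      (0 < (θ i).2 → (θ i).2 < 1 →
        ∑ k ∈ univ.erase i, (qhat1 q11 (θ k) - qs) = 0) := by
    intro i
    set A0 := ∑ k ∈ univ.erase i, ℓ0 (qhat0 q10 (θ k)) with hA0
    set B0 := ∑ k ∈ univ.erase i, ℓ1 (qhat0 q10 (θ k)) with hB0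
    set A1 := ∑ k ∈ univ.erase i, ℓ0 (qhat1 q11 (θ k)) with hA1
    set B1 := ∑ k ∈ univ.erase i, ℓ1 (qhat1 q11 (θ k)) with hB1
    have hsum0 : B0 - A0 = (a1 - a0) * ∑ k ∈ univ.erase i, (qhat0 q10 (θ k) - qs) := by
      rw [hB0, hA0, ← Finset.sum_sub_distrib, Finset.mul_sum]
      exact Finset.sum_congr rfl fun k _ => hgdiff _
    have hsum1 : B1 - A1 = (a1 - a0) * ∑ k ∈ univ.erase i, (qhat1 q11 (θ k) - qs) := by
      rw [hB1, hA1, ← Finset.sum_sub_distrib, Finset.mul_sum]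
      exact Finset.sum_congr rfl fun k _ => hgdiff _
    have hkey : ∀ s : ℝ × ℝ, ValidStrat s →
        0 ≤ (1 - q10 / (1 - q11 + q10)) * ((n:ℝ) - 1)⁻¹ * (((θ i).1 - s.1) * (B0 - A0))
          + (q10 / (1 - q11 + q10)) * ((n:ℝ) - 1)⁻¹ * (((θ i).2 - s.2) * (B1 - A1)) := by
      intro s hs
      have h := hbest i s hs
      have hupd : payoff n q10 q11 ℓ0 ℓ1 (Function.update θ i s) i
          = (1 - q10 / (1 - q11 + q10)) *
              ((1 - s.1) * (((n:ℝ) - 1)⁻¹ * A0) + s.1 * (((n:ℝ) - 1)⁻¹ * B0))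
            + (q10 / (1 - q11 + q10)) *
              ((1 - s.2) * (((n:ℝ) - 1)⁻¹ * A1) + s.2 * (((n:ℝ) - 1)⁻¹ * B1)) := by
        unfold payoff
        have e0 : ∑ k ∈ univ.erase i, ℓ0 (qhat0 q10 (Function.update θ i s k)) = A0 := by
          rw [hA0]
          exact Finset.sum_congr rfl fun k hk => by
            rw [Function.update_of_ne (Finset.ne_of_mem_erase hk)]
        have e1 : ∑ k ∈ univ.erase i, ℓ1 (qhat0 q10 (Function.update θ i s k)) = B0 := by
          rw [hB0]
          exact Finset.sum_congr rfl fun k hk => by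
            rw [Function.update_of_ne (Finset.ne_of_mem_erase hk)]
        have e2 : ∑ k ∈ univ.erase i, ℓ0 (qhat1 q11 (Function.update θ i s k)) = A1 := by
          rw [hA1]
          exact Finset.sum_congr rfl fun k hk => by
            rw [Function.update_of_ne (Finset.ne_of_mem_erase hk)]
        have e3 : ∑ k ∈ univ.erase i, ℓ1 (qhat1 q11 (Function.update θ i s k)) = B1 := by
          rw [hB1]
          exact Finset.sum_congr rfl fun k hk => by
            rw [Function.update_of_ne (Finset.ne_of_mem_erase hk)]
        rw [e0, e1, e2, e3, Function.update_self]
      have hθi : payoff n q10 q11 ℓ0 ℓ1 θ i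
          = (1 - q10 / (1 - q11 + q10)) *
              ((1 - (θ i).1) * (((n:ℝ) - 1)⁻¹ * A0) + (θ i).1 * (((n:ℝ) - 1)⁻¹ * B0))
            + (q10 / (1 - q11 + q10)) *
              ((1 - (θ i).2) * (((n:ℝ) - 1)⁻¹ * A1) + (θ i).2 * (((n:ℝ) - 1)⁻¹ * B1)) := by
        unfold payoff
        rw [← hA0, ← hB0, ← hA1, ← hB1]
      rw [hupd, hθi] at h
      linarith
    have hextract : ∀ (x t : ℝ), 0 < x → x < 1 →
        0 ≤ x * t → 0 ≤ (x - 1) * t → t = 0 := by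
      intro x t hx0 hx1 h1 h2
      rcases lt_trichotomy t 0 with h | h | h
      · nlinarith
      · exact h
      · nlinarith
    constructor
    · intro h0 h1
      have k0 := hkey (0, (θ i).2) ⟨⟨le_refl _, zero_le_one⟩, (hval i).2⟩
      have k1 := hkey (1, (θ i).2) ⟨⟨zero_le_one, le_refl _⟩, (hval i).2⟩
      dsimp only at k0 k1
      have hd0 : 0 ≤ (θ i).1 * (B0 - A0) := by
        nlinarith [mul_pos hq0pos hcpos]
      have hd1 : 0 ≤ ((θ i).1 - 1) * (B0 - A0) := by
        nlinarith [mul_pos hq0pos hcpos]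
      have hBA : B0 - A0 = 0 := hextract _ _ h0 h1 hd0 hd1
      have hprod : (a1 - a0) * ∑ k ∈ univ.erase i, (qhat0 q10 (θ k) - qs) = 0 := by
        rw [← hsum0]; linarith
      rcases mul_eq_zero.1 hprod with h | h
      · exact absurd h (by linarith)
      · exact h
    · intro h0 h1
      have k0 := hkey ((θ i).1, 0) ⟨(hval i).1, ⟨le_refl _, zero_le_one⟩⟩
      have k1 := hkey ((θ i).1, 1) ⟨(hval i).1, ⟨zero_le_one, le_refl _⟩⟩
      dsimp only at k0 k1
      have hd0 : 0 ≤ (θ i).2 * (B1 - A1) := by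
        nlinarith [mul_pos hq1pos hcpos]
      have hd1 : 0 ≤ ((θ i).2 - 1) * (B1 - A1) := by
        nlinarith [mul_pos hq1pos hcpos]
      have hBA : B1 - A1 = 0 := hextract _ _ h0 h1 hd0 hd1
      have hprod : (a1 - a0) * ∑ k ∈ univ.erase i, (qhat1 q11 (θ k) - qs) = 0 := by
        rw [← hsum1]; linarith
      rcases mul_eq_zero.1 hprod with h | h
      · exact absurd h (by linarith)
      · exact h
  -- sign disjunctions from the common quadrant
  obtain ⟨Q, hQ, hall⟩ := hquad
  have hsigns : ((∀ i, qhat0 q10 (θ i) ≤ qs) ∨ (∀ i, qs ≤ qhat0 q10 (θ i))) ∧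
      ((∀ i, qhat1 q11 (θ i) ≤ qs) ∨ (∀ i, qs ≤ qhat1 q11 (θ i))) := by
    simp only [Set.mem_insert_iff, Set.mem_singleton_iff] at hQ
    rcases hQ with rfl | rfl | rfl | rfl
    · exact ⟨Or.inl fun i => (hall i).1, Or.inr fun i => (hall i).2⟩
    · exact ⟨Or.inr fun i => (hall i).1, Or.inr fun i => (hall i).2⟩
    · exact ⟨Or.inl fun i => (hall i).1, Or.inl fun i => (hall i).2⟩
    · exact ⟨Or.inr fun i => (hall i).1, Or.inl fun i => (hall i).2⟩
  -- a zero one-signed sum has all terms zero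
  have hzs : ∀ (i : Fin n) (x : Fin n → ℝ),
      (∑ k ∈ univ.erase i, (x k - qs) = 0) →
      ((∀ k, x k ≤ qs) ∨ (∀ k, qs ≤ x k)) → ∀ k, k ≠ i → x k = qs := by
    intro i x hsum hsgn k hk
    have hkmem : k ∈ univ.erase i := Finset.mem_erase.2 ⟨hk, Finset.mem_univ k⟩
    rcases hsgn with h | h
    · have := (Finset.sum_eq_zero_iff_of_nonpos
        (fun m _ => by linarith [h m])).1 hsum k hkmem
      linarith
    · have := (Finset.sum_eq_zero_iff_of_nonneg
        (fun m _ => by linarith [h m])).1 hsum k hkmem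
      linarith
  obtain ⟨j, hjint⟩ := hint
  -- boundary strategies give points outside the interior of the hull
  have hbound : ∀ u v c : ℝ, (u ≠ 0 ∨ v ≠ 0) →
      c ≤ 0 → c ≤ u + v → c ≤ u * q10 + v * q11 → c ≤ u * (1 - q10) + v * (1 - q11) →
      u * qhat0 q10 (θ j) + v * qhat1 q11 (θ j) = c → False := by
    intro u v c huv h1 h2 h3 h4 hpt
    refine support_line_not_interior huv ?_ hpt hjint
    intro p hp
    refine convexHull_min ?_ (halfplane_convex u v c) hp
    intro x hx
    simp only [Set.mem_insert_iff, Set.mem_singleton_iff] at hx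
    rcases hx with rfl | rfl | rfl | rfl <;> simp only [Set.mem_setOf_eq] <;>
      · norm_num
        linarith
  have hθj : 0 < (θ j).1 ∧ (θ j).1 < 1 ∧ 0 < (θ j).2 ∧ (θ j).2 < 1 := by
    obtain ⟨⟨hj10, hj11⟩, hj20, hj21⟩ := hval j
    refine ⟨lt_of_le_of_ne hj10 fun h => ?_, lt_of_le_of_ne hj11 fun h => ?_,
      lt_of_le_of_ne hj20 fun h => ?_, lt_of_le_of_ne hj21 fun h => ?_⟩
    · exact hbound q11 (-q10) 0 (Or.inl (by intro hh; linarith)) le_rfl (by linarith)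
        (by nlinarith) (by nlinarith)
        (by unfold qhat0 qhat1; rw [← h]; ring)
    · exact hbound (-q11) q10 (q10 - q11) (Or.inl (by intro hh; linarith))
        (by linarith) (by linarith) (by nlinarith) (by nlinarith)
        (by unfold qhat0 qhat1; rw [h]; ring)
    · exact hbound (-(1 - q11)) (1 - q10) 0 (Or.inr (by intro hh; linarith)) le_rfl
        (by linarith) (by nlinarith) (by nlinarith)
        (by unfold qhat0 qhat1; rw [← h]; ring)
    · exact hbound (1 - q11) (-(1 - q10)) (q10 - q11) (Or.inl (by intro hh; linarith))
        (by linarith) (by linarith) (by nlinarith) (by nlinarith)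
        (by unfold qhat0 qhat1; rw [h]; ring)
  -- agent j is indifferent, so all other agents report at (qs, qs)
  have hjx := (hindiff j).1 hθj.1 hθj.2.1
  have hjy := (hindiff j).2 hθj.2.2.1 hθj.2.2.2
  have hoth0 : ∀ k, k ≠ j → qhat0 q10 (θ k) = qs :=
    hzs j (fun k => qhat0 q10 (θ k)) hjx hsigns.1
  have hoth1 : ∀ k, k ≠ j → qhat1 q11 (θ k) = qs :=
    hzs j (fun k => qhat1 q11 (θ k)) hjy hsigns.2
  -- pick another agent, recover its strategy and use its indifference
  obtain ⟨i0, hi0⟩ : ∃ i0 : Fin n, i0 ≠ j := by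
    have hcard : 1 < Fintype.card (Fin n) := by simp; omega
    exact Fintype.exists_ne_of_one_lt_card hcard j
  have hx0 := hoth0 i0 hi0
  have hy0 := hoth1 i0 hi0
  have hθi0 : (θ i0).1 = qs ∧ (θ i0).2 = qs := by
    unfold qhat0 at hx0
    unfold qhat1 at hy0
    have h12 : ((θ i0).1 - (θ i0).2) * (q11 - q10) = 0 := by linear_combination hx0 - hy0
    have h12' : (θ i0).1 = (θ i0).2 := by
      rcases mul_eq_zero.1 h12 with h | h
      · linarith
      · exact absurd h (by linarith)
    constructor
    · linear_combination hx0 + q10 * h12'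
    · linear_combination hy0 - (1 - q11) * h12'
  have hix := (hindiff i0).1 (by rw [hθi0.1]; linarith) (by rw [hθi0.1]; linarith)
  have hiy := (hindiff i0).2 (by rw [hθi0.2]; linarith) (by rw [hθi0.2]; linarith)
  have hj0 : qhat0 q10 (θ j) = qs :=
    hzs i0 (fun k => qhat0 q10 (θ k)) hix hsigns.1 j (Ne.symm hi0)
  have hj1 : qhat1 q11 (θ j) = qs :=
    hzs i0 (fun k => qhat1 q11 (θ k)) hiy hsigns.2 j (Ne.symm hi0)
  intro i
  by_cases hij : i = j
  · subst hij; rw [hj0, hj1]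
  · rw [hoth0 i hij, hoth1 i hij]
end
end

section
/- Let 0 < q10 < q11 < 1, q01 := 1 − q11, q00 := 1 − q10, and suppose q01 ≤ q10 < q* < q00 ≤ q11 and q10 ≠ q01. Define the translated equilibrium points T := (q10, q11), F := (q10 − q10·q*/q01 + q*, q01·(q00 − q*)/q10 + q*), T1 := (q*, (q11 − q10)(1 − q*)/q00 + q*), T0 := (q10·q*/q11, q*), F1 := (q*, (q11 − q10)(1 − q*)·q01/(q11·q10) + q*), F0 := (q* − (q11 − q10)·q10·q*/(q00·q01), q*), and Q := (q*, q*). Then: (i) T is an extreme point of the convex hull of {T, F, T1, T0, F1, F0, Q}; (ii) if instead q* = q00 (still q10 ≠ q01), then T lies on the line segment with endpoints T1 and F; (iii) if instead q00 < q* < q11, then T is an extreme point of the convex hull of {T, T1, T0, F1, Q}. -/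
/-!
`T` is a strict maximiser, over the listed points, of a linear functional, and a strict
maximiser of a linear functional on `s` is an extreme point of `convexHull s`. For `q* < q00`
the functional is `(x, y) ↦ q*·y − q01·x`; at `q* = q00` its level line through `T` also
passes through `T1` and `F`, which is the degenerate case (ii). For `q* > q00` the functional
`(x, y) ↦ y − x` works.
-/

noncomputable section

/-- Translated truth-telling equilibrium `T = (q10, q11)`. -/
def Tpt (q10 q11 : ℝ) : ℝ × ℝ := (q10, q11)

/-- Translated lying equilibrium
`F = (q10 − q10·q*/q01 + q*, q01·(q00 − q*)/q10 + q*)`. -/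
def Fpt (q10 q11 qs : ℝ) : ℝ × ℝ :=
  (q10 - q10 * qs / (1 - q11) + qs, (1 - q11) * ((1 - q10) - qs) / q10 + qs)

/-- Translated equilibrium `T1 = (q*, (q11 − q10)(1 − q*)/q00 + q*)`. -/
def T1pt (q10 q11 qs : ℝ) : ℝ × ℝ := (qs, (q11 - q10) * (1 - qs) / (1 - q10) + qs)

/-- Translated equilibrium `T0 = (q10·q*/q11, q*)`. -/
def T0pt (q10 q11 qs : ℝ) : ℝ × ℝ := (q10 * qs / q11, qs)

/-- Translated equilibrium `F1 = (q*, (q11 − q10)(1 − q*)·q01/(q11·q10) + q*)`. -/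
def F1pt (q10 q11 qs : ℝ) : ℝ × ℝ :=
  (qs, (q11 - q10) * (1 - qs) * (1 - q11) / (q11 * q10) + qs)

/-- Translated equilibrium `F0 = (q* − (q11 − q10)·q10·q*/(q00·q01), q*)`. -/
def F0pt (q10 q11 qs : ℝ) : ℝ × ℝ :=
  (qs - (q11 - q10) * q10 * qs / ((1 - q10) * (1 - q11)), qs)

/-- Translated full-support equilibrium `Q = (q*, q*)`. -/
def Qpt (qs : ℝ) : ℝ × ℝ := (qs, qs)

section StrictMaximizer

variable {𝕜 E : Type*} [Ring 𝕜] [LinearOrder 𝕜] [IsStrictOrderedRing 𝕜] [AddCommGroup E]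
  [Module 𝕜 E] {s : Set E} {x : E}

theorem combo_lt_of_lt_of_le {a b u v w : 𝕜} (ha : 0 < a) (hb : 0 ≤ b) (hab : a + b = 1)
    (hu : u < w) (hv : v ≤ w) : a * u + b * v < w := by
  calc a * u + b * v < a * w + b * w :=
        add_lt_add_of_lt_of_le (mul_lt_mul_of_pos_left hu ha) (mul_le_mul_of_nonneg_left hv hb)
    _ = w := by rw [← add_mul, hab, one_mul]

theorem convex_insert_setOf_lt (l : E →ₗ[𝕜] 𝕜) :
    Convex 𝕜 (insert x {z | l z < l x}) := by
  refine convex_iff_forall_pos.2 fun z₁ hz₁ z₂ hz₂ a b ha hb hab => ?_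
  have hcombo : l (a • z₁ + b • z₂) = a * l z₁ + b * l z₂ := by simp
  have hle₂ : l z₂ ≤ l x := by rcases hz₂ with rfl | h; exacts [le_rfl, h.le]
  rcases hz₁ with rfl | hlt₁
  · rcases hz₂ with rfl | hlt₂
    · exact .inl (Convex.combo_self hab _)
    · refine .inr ?_
      rw [Set.mem_ofPred_eq, hcombo, add_comm]
      exact combo_lt_of_lt_of_le hb ha.le ((add_comm b a).trans hab) hlt₂ le_rfl
  · refine .inr ?_
    rw [Set.mem_ofPred_eq, hcombo]
    exact combo_lt_of_lt_of_le ha hb.le hab hlt₁ hle₂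

theorem lt_of_mem_convexHull_of_ne (l : E →ₗ[𝕜] 𝕜) (hs : ∀ y ∈ s, y ≠ x → l y < l x)
    {z : E} (hz : z ∈ convexHull 𝕜 s) (hzx : z ≠ x) : l z < l x := by
  have hsub : s ⊆ insert x {z | l z < l x} := fun y hy => (eq_or_ne y x).imp id (hs y hy)
  exact (convexHull_min hsub (convex_insert_setOf_lt l) hz).resolve_left hzx

theorem mem_extremePoints_convexHull_of_forall_lt (l : E →ₗ[𝕜] 𝕜) (hx : x ∈ s)
    (hs : ∀ y ∈ s, y ≠ x → l y < l x) : x ∈ (convexHull 𝕜 s).extremePoints 𝕜 := by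
  refine ⟨subset_convexHull 𝕜 s hx, fun z₁ hz₁ z₂ hz₂ ⟨a, b, ha, hb, hab, hx'⟩ => ?_⟩
  by_contra hne
  have hle₂ : l z₂ ≤ l x := by
    rcases eq_or_ne z₂ x with rfl | h₂
    exacts [le_rfl, (lt_of_mem_convexHull_of_ne l hs hz₂ h₂).le]
  have hcombo : l x = a * l z₁ + b * l z₂ := by rw [← hx']; simp
  exact ne_of_gt
    (combo_lt_of_lt_of_le ha hb.le hab (lt_of_mem_convexHull_of_ne l hs hz₁ hne) hle₂) hcombo

end StrictMaximizer

def slopeFunctional (a b : ℝ) : ℝ × ℝ →ₗ[ℝ] ℝ :=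
  a • LinearMap.snd ℝ ℝ ℝ - b • LinearMap.fst ℝ ℝ ℝ

@[simp]
theorem slopeFunctional_apply (a b : ℝ) (p : ℝ × ℝ) :
    slopeFunctional a b p = a * p.2 - b * p.1 :=
  rfl

section TranslatedEquilibria

variable {q10 q11 qs : ℝ}

theorem slopeFunctional_Fpt_lt (hq10 : 0 < q10) (hq11 : q11 < 1) (h01 : 1 - q11 < q10)
    (hqs : 0 < qs) (hqs00 : qs < 1 - q10) :
    slopeFunctional qs (1 - q11) (Fpt q10 q11 qs) <
      slopeFunctional qs (1 - q11) (Tpt q10 q11) := by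
  have hq01 : 1 - q11 ≠ 0 := by linarith
  rw [← sub_pos]
  calc 0 < qs * (1 - q10 - qs) * (q10 - (1 - q11)) / q10 :=
        div_pos (mul_pos (mul_pos hqs (by linarith)) (by linarith)) hq10
    _ = _ := by simp only [slopeFunctional_apply, Tpt, Fpt]; field_simp; ring

theorem slopeFunctional_T1pt_lt (hq10 : 0 < q10) (hq11 : q11 < 1) (hqs1 : q10 < qs)
    (hqs00 : qs < 1 - q10) :
    slopeFunctional qs (1 - q11) (T1pt q10 q11 qs) <
      slopeFunctional qs (1 - q11) (Tpt q10 q11) := by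
  have hq00 : 0 < 1 - q10 := by linarith
  rw [← sub_pos]
  calc 0 < (qs - q10) * (1 - q11) * (1 - q10 - qs) / (1 - q10) :=
        div_pos (mul_pos (mul_pos (by linarith) (by linarith)) (by linarith)) hq00
    _ = _ := by simp only [slopeFunctional_apply, Tpt, T1pt]; field_simp; ring

theorem slopeFunctional_T0pt_lt (hq10 : 0 < q10) (hcorr : q10 < q11) (h01 : 1 - q11 < q10)
    (hqs1 : q10 < qs) (hqs2 : qs < q11) :
    slopeFunctional qs (1 - q11) (T0pt q10 q11 qs) <
      slopeFunctional qs (1 - q11) (Tpt q10 q11) := by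
  have hq11 : 0 < q11 := by linarith
  rw [← sub_pos]
  calc 0 < (q11 - qs) * (qs * q11 - (1 - q11) * q10) / q11 :=
        div_pos (mul_pos (by linarith) (by nlinarith)) hq11
    _ = _ := by simp only [slopeFunctional_apply, Tpt, T0pt]; field_simp

theorem slopeFunctional_F1pt_lt (hq10 : 0 < q10) (hq11 : q11 < 1) (h01 : 1 - q11 < q10)
    (hqs1 : q10 < qs) (hqs00 : qs < 1 - q10) :
    slopeFunctional qs (1 - q11) (F1pt q10 q11 qs) <
      slopeFunctional qs (1 - q11) (Tpt q10 q11) := by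
  have hq11' : 0 < q11 := by linarith
  have hq00 : 0 < 1 - q10 := by linarith
  have hT : 0 < (1 - q11) * q11 * q10 * (qs - q10) * (1 - q10 - qs) :=
    mul_pos (mul_pos (mul_pos (mul_pos (by linarith) hq11') hq10) (by linarith)) (by linarith)
  have hF : 0 < qs * (q11 - q10) * (1 - qs) * (q10 + q11 - 1) :=
    mul_pos (mul_pos (mul_pos (by linarith) (by linarith)) (by linarith)) (by linarith)
  rw [← sub_pos]
  calc 0 < ((1 - q11) * q11 * q10 * (qs - q10) * (1 - q10 - qs)
          + qs * (q11 - q10) * (1 - qs) * (q10 + q11 - 1)) / ((1 - q10) * q11 * q10) :=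
        div_pos (add_pos hT hF) (by positivity)
    _ = _ := by simp only [slopeFunctional_apply, Tpt, F1pt]; field_simp; ring

theorem slopeFunctional_F0pt_lt (hq10 : 0 < q10) (hq11 : q11 < 1) (h01 : 1 - q11 < q10)
    (hqs1 : q10 < qs) (hqs00 : qs < 1 - q10) :
    slopeFunctional qs (1 - q11) (F0pt q10 q11 qs) <
      slopeFunctional qs (1 - q11) (Tpt q10 q11) := by
  have hq00 : 0 < 1 - q10 := by linarith
  have hq01 : 1 - q11 ≠ 0 := by linarith
  rw [← sub_pos]
  calc 0 < (1 - q10 - qs) * (qs * (1 - q10) - q10 * (1 - q11)) / (1 - q10) :=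
        div_pos (mul_pos (by linarith) (by nlinarith)) hq00
    _ = _ := by simp only [slopeFunctional_apply, Tpt, F0pt]; field_simp; ring

theorem slopeFunctional_Qpt_lt (hq11 : q11 < 1) (hqs : 0 < qs) (hqs1 : q10 < qs)
    (hqs2 : qs < q11) :
    slopeFunctional qs (1 - q11) (Qpt qs) < slopeFunctional qs (1 - q11) (Tpt q10 q11) := by
  simp only [slopeFunctional_apply, Tpt, Qpt]
  nlinarith [mul_pos (sub_pos.2 hqs2) hqs, mul_pos (sub_pos.2 hq11) (sub_pos.2 hqs1)]

theorem slopeFunctional_one_T1pt_lt (hcorr : q10 < q11) (hq11 : q11 < 1) (hqs1 : q10 < qs) :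
    slopeFunctional 1 1 (T1pt q10 q11 qs) < slopeFunctional 1 1 (Tpt q10 q11) := by
  have hq00 : 0 < 1 - q10 := by linarith
  rw [← sub_pos]
  calc 0 < (qs - q10) * (q11 - q10) / (1 - q10) :=
        div_pos (mul_pos (by linarith) (by linarith)) hq00
    _ = _ := by simp only [slopeFunctional_apply, Tpt, T1pt]; field_simp; ring

theorem slopeFunctional_one_T0pt_lt (hq10 : 0 < q10) (hcorr : q10 < q11) (hqs2 : qs < q11) :
    slopeFunctional 1 1 (T0pt q10 q11 qs) < slopeFunctional 1 1 (Tpt q10 q11) := by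
  have hq11 : 0 < q11 := by linarith
  rw [← sub_pos]
  calc 0 < (q11 - qs) * (q11 - q10) / q11 := div_pos (mul_pos (by linarith) (by linarith)) hq11
    _ = _ := by simp only [slopeFunctional_apply, Tpt, T0pt]; field_simp

theorem slopeFunctional_one_F1pt_lt (hq10 : 0 < q10) (hcorr : q10 < q11) (hq11 : q11 < 1)
    (h01 : 1 - q11 ≤ q10) (hqs00 : 1 - q10 < qs) :
    slopeFunctional 1 1 (F1pt q10 q11 qs) < slopeFunctional 1 1 (Tpt q10 q11) := by
  have hq11' : 0 < q11 := by linarith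
  have hprod : (1 - qs) * (1 - q11) < q11 * q10 := by
    nlinarith [mul_lt_mul_of_pos_right (show 1 - qs < q10 by linarith) (sub_pos.2 hq11),
      mul_le_mul_of_nonneg_left (show 1 - q11 ≤ q11 by linarith) hq10.le]
  rw [← sub_pos]
  calc 0 < (q11 - q10) * (q11 * q10 - (1 - qs) * (1 - q11)) / (q11 * q10) :=
        div_pos (mul_pos (by linarith) (by linarith)) (by positivity)
    _ = _ := by simp only [slopeFunctional_apply, Tpt, F1pt]; field_simp; ring

theorem slopeFunctional_one_Qpt_lt (hcorr : q10 < q11) :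
    slopeFunctional 1 1 (Qpt qs) < slopeFunctional 1 1 (Tpt q10 q11) := by
  simp only [slopeFunctional_apply, Tpt, Qpt]
  linarith

theorem Tpt_mem_segment_T1pt_Fpt (hq10 : 0 < q10) (hcorr : q10 < q11)
    (hq11 : q11 < 1) (h01 : 1 - q11 ≤ q10) (hq00 : q10 ≤ 1 - q10) :
    Tpt q10 q11 ∈ segment ℝ (T1pt q10 q11 (1 - q10)) (Fpt q10 q11 (1 - q10)) := by
  have hd : 0 < (q11 - q10) * q10 := mul_pos (by linarith) hq10
  have hq01 : 1 - q11 ≠ 0 := by linarith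
  have hcorr' : q11 - q10 ≠ 0 := by linarith
  have hq00' : 1 - q10 ≠ 0 := by linarith
  refine ⟨(q10 + q11 - 1) * (1 - q10) / ((q11 - q10) * q10),
    (1 - q11) * (1 - 2 * q10) / ((q11 - q10) * q10),
    div_nonneg (mul_nonneg (by linarith) (by linarith)) hd.le,
    div_nonneg (mul_nonneg (by linarith) (by linarith)) hd.le, ?_, ?_⟩
  · field_simp
    ring
  · simp only [T1pt, Fpt, Tpt, Prod.smul_mk, smul_eq_mul, Prod.mk_add_mk, Prod.mk.injEq]
    constructor <;> field_simp <;> ring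

end TranslatedEquilibria

/-- **Truth-telling is extremal among translated informative equilibria (Lemma 5.6).**
With `q01 = 1 − q11 ≤ q10`, `q10 ≠ q01` and `q10 < q* < q11`:
(i) if `q* < q00 = 1 − q10`, then `T` is an extreme point of the convex hull of the seven
translated equilibria `{T, F, T1, T0, F1, F0, Q}`;
(ii) if `q* = q00`, then `T` lies on the segment from `T1` to `F`;
(iii) if `q00 < q*`, then `T` is an extreme point of the convex hull of `{T, T1, T0, F1, Q}`. -/
theorem truthtelling_extreme_point (q10 q11 qs : ℝ)
    (hq10 : 0 < q10) (hcorr : q10 < q11) (hq11 : q11 < 1)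
    (h01le : 1 - q11 ≤ q10) (hne : q10 ≠ 1 - q11)
    (hqs1 : q10 < qs) (hqs2 : qs < q11) :
    (qs < 1 - q10 →
      Tpt q10 q11 ∈ Set.extremePoints ℝ (convexHull ℝ
        ({Tpt q10 q11, Fpt q10 q11 qs, T1pt q10 q11 qs, T0pt q10 q11 qs,
          F1pt q10 q11 qs, F0pt q10 q11 qs, Qpt qs} : Set (ℝ × ℝ)))) ∧
    (qs = 1 - q10 →
      Tpt q10 q11 ∈ segment ℝ (T1pt q10 q11 qs) (Fpt q10 q11 qs)) ∧
    (1 - q10 < qs →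
      Tpt q10 q11 ∈ Set.extremePoints ℝ (convexHull ℝ
        ({Tpt q10 q11, T1pt q10 q11 qs, T0pt q10 q11 qs, F1pt q10 q11 qs, Qpt qs} :
          Set (ℝ × ℝ)))) := by
  have h01 : 1 - q11 < q10 := lt_of_le_of_ne h01le hne.symm
  have hqs : 0 < qs := hq10.trans hqs1
  refine ⟨fun hqs00 => ?_, fun hqs00 => ?_, fun hqs00 => ?_⟩
  · refine mem_extremePoints_convexHull_of_forall_lt (slopeFunctional qs (1 - q11))
      (Set.mem_insert _ _) ?_
    rintro p (rfl | rfl | rfl | rfl | rfl | rfl | rfl) hp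
    exacts [absurd rfl hp, slopeFunctional_Fpt_lt hq10 hq11 h01 hqs hqs00,
      slopeFunctional_T1pt_lt hq10 hq11 hqs1 hqs00,
      slopeFunctional_T0pt_lt hq10 hcorr h01 hqs1 hqs2,
      slopeFunctional_F1pt_lt hq10 hq11 h01 hqs1 hqs00,
      slopeFunctional_F0pt_lt hq10 hq11 h01 hqs1 hqs00,
      slopeFunctional_Qpt_lt hq11 hqs hqs1 hqs2]
  · subst hqs00
    exact Tpt_mem_segment_T1pt_Fpt hq10 hcorr hq11 h01le hqs1.le
  · refine mem_extremePoints_convexHull_of_forall_lt (slopeFunctional 1 1) (Set.mem_insert _ _) ?_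
    rintro p (rfl | rfl | rfl | rfl | rfl) hp
    exacts [absurd rfl hp, slopeFunctional_one_T1pt_lt hcorr hq11 hqs1,
      slopeFunctional_one_T0pt_lt hq10 hcorr hqs2,
      slopeFunctional_one_F1pt_lt hq10 hcorr hq11 h01le hqs00,
      slopeFunctional_one_Qpt_lt hcorr]
end
end

section
/- Let 0 < q10 < q11 < 1, q01 := 1 − q11, q00 := 1 − q10, q1 := q10/(q01 + q10), q0 := 1 − q1, and suppose q01 ≤ q10 < q* ≤ q00 ≤ q11. Consider the four pairs of translated points: {f(0), f(1)} with f(0) = (−q*·q1/q0, q*) and f(1) = (q*, (1 − q*·q0)/q1); {T, F} with T = (q10, q11) and F = (q10 − q10·q*/q01 + q*, q01·(q00 − q*)/q10 + q*); {T1, F0} with T1 = (q*, (q11 − q10)(1 − q*)/q00 + q*) and F0 = (q* − (q11 − q10)·q10·q*/(q00·q01), q*); and {T0, F1} with T0 = (q10·q*/q11, q*) and F1 = (q*, (q11 − q10)(1 − q*)·q01/(q11·q10) + q*). Then the slope of the line through each pair equals q01·(1 − q*)/(q10·q*), so all four lines are parallel, and this common slope is strictly positive. -/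
section TranslatedPairs

variable {q00 q01 q10 q11 qs : ℝ}

theorem allZero_allOne_slope (h01 : q01 ≠ 0) (h10 : q10 ≠ 0) (hsum : q01 + q10 ≠ 0)
    (hs : qs ≠ 0) {q1 q0 : ℝ} (hq1 : q1 = q10 / (q01 + q10)) (hq0 : q0 = 1 - q1) :
    qs - (1 - qs * q0) / q1 = q01 * (1 - qs) / (q10 * qs) * (-qs * q1 / q0 - qs) := by
  have hq0' : q0 = q01 / (q01 + q10) := by
    rw [hq0, hq1]
    field_simp
    ring
  rw [hq0', hq1]
  field_simp
  ring

theorem truth_lie_slope (h01 : q01 ≠ 0) (h10 : q10 ≠ 0) (hs : qs ≠ 0)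
    (hq01 : q01 = 1 - q11) (hq00 : q00 = 1 - q10) :
    q11 - (q01 * (q00 - qs) / q10 + qs) =
      q01 * (1 - qs) / (q10 * qs) * (q10 - (q10 - q10 * qs / q01 + qs)) := by
  subst hq01 hq00
  field_simp
  ring

theorem truOne_falZero_slope (h00 : q00 ≠ 0) (h01 : q01 ≠ 0) (h10 : q10 ≠ 0) (hs : qs ≠ 0)
    (d : ℝ) :
    d * (1 - qs) / q00 + qs - qs =
      q01 * (1 - qs) / (q10 * qs) * (qs - (qs - d * q10 * qs / (q00 * q01))) := by
  field_simp
  ring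

theorem truZero_falOne_slope (h10 : q10 ≠ 0) (h11 : q11 ≠ 0) (hs : qs ≠ 0) :
    qs - ((q11 - q10) * (1 - qs) * q01 / (q11 * q10) + qs) =
      q01 * (1 - qs) / (q10 * qs) * (q10 * qs / q11 - qs) := by
  field_simp
  ring

end TranslatedPairs

theorem translated_pairs_parallel_general (q10 q11 qs : ℝ)
    (hq10 : 0 < q10) (hcorr : q10 < q11) (hq11 : q11 < 1)
    (hqs1 : q10 < qs) (hqs2 : qs ≤ 1 - q10) :
    -- abbreviations
    let q01 : ℝ := 1 - q11
    let q00 : ℝ := 1 - q10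
    let q1 : ℝ := q10 / (q01 + q10)
    let q0 : ℝ := 1 - q1
    let slope : ℝ := q01 * (1 - qs) / (q10 * qs)
    let f0 : ℝ × ℝ := (-qs * q1 / q0, qs)                                -- translated all-0
    let f1 : ℝ × ℝ := (qs, (1 - qs * q0) / q1)                           -- translated all-1
    let T : ℝ × ℝ := (q10, q11)                                          -- truth-telling
    let F : ℝ × ℝ := (q10 - q10 * qs / q01 + qs, q01 * (q00 - qs) / q10 + qs)  -- lying
    let T1 : ℝ × ℝ := (qs, (q11 - q10) * (1 - qs) / q00 + qs)
    let F0 : ℝ × ℝ := (qs - (q11 - q10) * q10 * qs / (q00 * q01), qs)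
    let T0 : ℝ × ℝ := (q10 * qs / q11, qs)
    let F1 : ℝ × ℝ := (qs, (q11 - q10) * (1 - qs) * q01 / (q11 * q10) + qs)
    0 < slope ∧
    f0.2 - f1.2 = slope * (f0.1 - f1.1) ∧
    T.2 - F.2 = slope * (T.1 - F.1) ∧
    T1.2 - F0.2 = slope * (T1.1 - F0.1) ∧
    T0.2 - F1.2 = slope * (T0.1 - F1.1) := by
  intro q01 q00 q1 q0 slope f0 f1 T F T1 F0 T0 F1
  have h01 : 0 < q01 := sub_pos.mpr hq11
  have h00 : 0 < q00 := by linarith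
  have h11 : 0 < q11 := hq10.trans hcorr
  have hs : 0 < qs := hq10.trans hqs1
  have hs1 : 0 < 1 - qs := by linarith
  refine ⟨by positivity, ?_, ?_, ?_, ?_⟩
  · exact allZero_allOne_slope h01.ne' hq10.ne' (by positivity) hs.ne' rfl rfl
  · exact truth_lie_slope h01.ne' hq10.ne' hs.ne' rfl rfl
  · exact truOne_falZero_slope h00.ne' h01.ne' hq10.ne' hs.ne' (q11 - q10)
  · exact truZero_falOne_slope hq10.ne' h11.ne' hs.ne'

/-- **The four pairs of translated equilibria lie on parallel lines of positive slope
(Claim 5.7).**  With `q01 = 1 − q11 ≤ q10 < q* ≤ q00 = 1 − q10 ≤ q11`,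
`q1 = q10/(q01 + q10)`, `q0 = 1 − q1`, the line through each of the pairs
`{f(0), f(1)}`, `{T, F}`, `{T1, F0}`, `{T0, F1}` of translated equilibria has slope
`q01·(1 − q*)/(q10·q*)`, which is strictly positive; hence all four lines are parallel. -/
theorem translated_pairs_parallel (q10 q11 qs : ℝ)
    (hq10 : 0 < q10) (hcorr : q10 < q11) (hq11 : q11 < 1)
    (h01le : 1 - q11 ≤ q10) (h00le : 1 - q10 ≤ q11)
    (hqs1 : q10 < qs) (hqs2 : qs ≤ 1 - q10) :
    -- abbreviations
    let q01 : ℝ := 1 - q11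
    let q00 : ℝ := 1 - q10
    let q1 : ℝ := q10 / (q01 + q10)
    let q0 : ℝ := 1 - q1
    let slope : ℝ := q01 * (1 - qs) / (q10 * qs)
    let f0 : ℝ × ℝ := (-qs * q1 / q0, qs)                                -- translated all-0
    let f1 : ℝ × ℝ := (qs, (1 - qs * q0) / q1)                           -- translated all-1
    let T : ℝ × ℝ := (q10, q11)                                          -- truth-telling
    let F : ℝ × ℝ := (q10 - q10 * qs / q01 + qs, q01 * (q00 - qs) / q10 + qs)  -- lying
    let T1 : ℝ × ℝ := (qs, (q11 - q10) * (1 - qs) / q00 + qs)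
    let F0 : ℝ × ℝ := (qs - (q11 - q10) * q10 * qs / (q00 * q01), qs)
    let T0 : ℝ × ℝ := (q10 * qs / q11, qs)
    let F1 : ℝ × ℝ := (qs, (q11 - q10) * (1 - qs) * q01 / (q11 * q10) + qs)
    0 < slope ∧
    f0.2 - f1.2 = slope * (f0.1 - f1.1) ∧
    T.2 - F.2 = slope * (T.1 - F.1) ∧
    T1.2 - F0.2 = slope * (T1.1 - F0.1) ∧
    T0.2 - F1.2 = slope * (T0.1 - F1.1) :=
  translated_pairs_parallel_general q10 q11 qs hq10 hcorr hq11 hqs1 hqs2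
end

section
/- Let 0 < q10 < q11 < 1, q01 := 1 − q11, q00 := 1 − q10, q1 := q10/(q01 + q10), and suppose q01 ≤ q10 < q* < q00 ≤ q11. Define the four real numbers I1 := (q11 − q10)(1 − q*)·q01/(q11·q10) + q*, I2 := (q11 − q10)(1 − q*)/q00 + q*, I3 := ((q01 + q10)(1 − q*)·q* − q10·q01)/(q10·q*) + q*, and I4 := (1 − q*)/q1 + q* (these are the y-intercepts of the four parallel lines through the pairs {T0,F1}, {T1,F0}, {T,F}, {0,1} of translated equilibria). Then I1 ≤ I2 < I3 < I4. -/
noncomputable section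

/-- **Ordering of the four parallel lines (Claim 5.8).**  With
`q01 = 1 − q11 ≤ q10 < q* < q00 = 1 − q10 ≤ q11` and `q1 = q10/(q01 + q10)`, the
`y`-intercepts `I1, I2, I3, I4` of the four parallel lines through the translated pairs
`{T0,F1}`, `{T1,F0}`, `{T,F}`, `{0,1}` satisfy `I1 ≤ I2 < I3 < I4`. -/
theorem intercepts_ordered (q10 q11 qs : ℝ)
    (hq10 : 0 < q10) (hcorr : q10 < q11) (hq11 : q11 < 1)
    (h01le : 1 - q11 ≤ q10) (h00le : 1 - q10 ≤ q11)
    (hqs1 : q10 < qs) (hqs2 : qs < 1 - q10) :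
    let q01 : ℝ := 1 - q11
    let q00 : ℝ := 1 - q10
    let q1 : ℝ := q10 / (q01 + q10)
    let I1 : ℝ := (q11 - q10) * (1 - qs) * q01 / (q11 * q10) + qs
    let I2 : ℝ := (q11 - q10) * (1 - qs) / q00 + qs
    let I3 : ℝ := ((q01 + q10) * (1 - qs) * qs - q10 * q01) / (q10 * qs) + qs
    let I4 : ℝ := (1 - qs) / q1 + qs
    I1 ≤ I2 ∧ I2 < I3 ∧ I3 < I4 := by
  intro q01 q00 q1 I1 I2 I3 I4
  have hqs0 : 0 < qs := lt_trans hq10 hqs1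
  have h110 : 0 < q11 := lt_trans hq10 hcorr
  have h000 : (0:ℝ) < 1 - q10 := lt_trans hqs0 hqs2
  have hsum : (0:ℝ) < 1 - q11 + q10 := by linarith
  refine ⟨?_, ?_, ?_⟩
  · simp only [I1, I2, q01, q00]
    gcongr ?_ + qs
    rw [div_le_div_iff₀ (by positivity) h000]
    nlinarith [mul_pos hq10 hqs0, sub_nonneg.mpr h00le, mul_nonneg (mul_nonneg (le_of_lt (sub_pos.mpr hcorr)) (by linarith : (0:ℝ) ≤ 1 - qs)) (sub_nonneg.mpr h00le)]
  · simp only [I2, I3, q01, q00]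
    gcongr ?_ + qs
    rw [div_lt_div_iff₀ h000 (by positivity)]
    nlinarith [mul_pos hq10 hqs0, sub_pos.mpr hqs1, sub_pos.mpr hqs2, mul_pos (sub_pos.mpr hqs1) (sub_pos.mpr hqs2)]
  · simp only [I3, I4, q01, q1]
    gcongr ?_ + qs
    rw [div_div_eq_mul_div, div_lt_div_iff₀ (by positivity) hq10]
    nlinarith [mul_pos (mul_pos hq10 hq10) (sub_pos.mpr hq11)]
end
end

section
/- Let 0 < q10 < q11 < 1, let q* satisfy q10 < q* < q11, let β < α be reals, and let γ ∈ ℝ. Then there exists a strictly proper scoring rule PS : ℝ × ℝ → ℝ (i.e., PS is affine in its first argument and for each p the function q ↦ PS(p, q) attains a strict global maximum at q = p) such that PS(x, q10) = β·(x − q*) + γ and PS(x, q11) = α·(x − q*) + γ for all x ∈ ℝ. Equivalently, there exists a strictly convex differentiable function r : ℝ → ℝ with r'(q10) = β, r'(q11) = α, and r(q11) − r(q10) = α·(q11 − q*) − β·(q10 − q*). -/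
/-!
A scoring rule with the prescribed lines is the Bregman score of a strictly convex `r` whose
tangent lines at `q10` and `q11` have slopes `β`, `α` and both pass through `(q*, γ)`; the Bregman
score is strictly proper because `r` lies strictly above each of its tangent lines.
-/

open Set Topology

theorem StrictConvexOn.add_mul_sub_lt_of_hasDerivAt {S : Set ℝ} {f : ℝ → ℝ} {f' x y : ℝ}
    (hf : StrictConvexOn ℝ S f) (hx : x ∈ S) (hy : y ∈ S) (hyx : y ≠ x)
    (hd : HasDerivAt f f' x) : f x + f' * (y - x) < f y := by
  rcases hyx.lt_or_gt with hlt | hgt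
  · have hslope := hf.slope_lt_of_hasDerivAt hy hx hlt hd
    rw [slope_def_field, div_lt_iff₀ (sub_pos.2 hlt)] at hslope
    linarith
  · have hslope := hf.lt_slope_of_hasDerivAt hx hy hgt hd
    rw [slope_def_field, lt_div_iff₀ (sub_pos.2 hgt)] at hslope
    linarith

theorem hasDerivAt_max_zero_sq (x : ℝ) :
    HasDerivAt (fun y : ℝ => max y 0 ^ 2) (2 * max x 0) x := by
  rcases lt_trichotomy x 0 with hx | rfl | hx
  · have hzero : (fun y : ℝ => max y 0 ^ 2) =ᶠ[𝓝 x] fun _ => 0 := by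
      filter_upwards [Iio_mem_nhds hx] with y hy
      simp [max_eq_right (mem_Iio.1 hy).le]
    simpa [max_eq_right hx.le] using (hasDerivAt_const x (0 : ℝ)).congr_of_eventuallyEq hzero
  · have hleft : HasDerivWithinAt (fun y : ℝ => max y 0 ^ 2) 0 (Iic 0) 0 :=
      (hasDerivWithinAt_const _ _ 0).congr (fun y hy => by simp [max_eq_right (mem_Iic.1 hy)])
        (by simp)
    have hright : HasDerivWithinAt (fun y : ℝ => max y 0 ^ 2) 0 (Ici 0) 0 := by
      simpa using (hasDerivAt_pow 2 (0 : ℝ)).hasDerivWithinAt.congr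
        (fun y hy => by simp [max_eq_left (mem_Ici.1 hy)]) (by simp)
    simpa using (hleft.union hright).hasDerivAt (by simp)
  · have hsq : (fun y : ℝ => max y 0 ^ 2) =ᶠ[𝓝 x] fun y => y ^ 2 := by
      filter_upwards [Ioi_mem_nhds hx] with y hy
      simp [max_eq_left (mem_Ioi.1 hy).le]
    simpa [max_eq_left hx.le] using (hasDerivAt_pow 2 x).congr_of_eventuallyEq hsq

theorem hasDerivAt_min_zero_sq (x : ℝ) :
    HasDerivAt (fun y : ℝ => min y 0 ^ 2) (2 * min x 0) x := by
  have hneg : ∀ y : ℝ, max (-y) 0 = -min y 0 := fun y => by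
    rw [← neg_zero, max_neg_neg, neg_zero]
  have h := (hasDerivAt_max_zero_sq (-x)).comp x (hasDerivAt_neg x)
  simp only [Function.comp_def, hneg, neg_sq] at h
  exact h.congr_deriv (by ring)

noncomputable def kinkedQuadratic (κl κr y : ℝ) : ℝ := κl / 2 * min y 0 ^ 2 + κr / 2 * max y 0 ^ 2

section kinkedQuadratic

variable {κl κr y : ℝ}

theorem kinkedQuadratic_of_nonpos (hy : y ≤ 0) : kinkedQuadratic κl κr y = κl / 2 * y ^ 2 := by
  simp [kinkedQuadratic, min_eq_left hy, max_eq_right hy]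

theorem kinkedQuadratic_of_nonneg (hy : 0 ≤ y) : kinkedQuadratic κl κr y = κr / 2 * y ^ 2 := by
  simp [kinkedQuadratic, min_eq_right hy, max_eq_left hy]

theorem hasDerivAt_kinkedQuadratic (κl κr y : ℝ) :
    HasDerivAt (kinkedQuadratic κl κr) (κl * min y 0 + κr * max y 0) y :=
  (((hasDerivAt_min_zero_sq y).const_mul (κl / 2)).add
    ((hasDerivAt_max_zero_sq y).const_mul (κr / 2))).congr_deriv (by ring)

theorem strictMono_deriv_kinkedQuadratic (hl : 0 < κl) (hr : 0 < κr) :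
    StrictMono fun y : ℝ => κl * min y 0 + κr * max y 0 := by
  refine StrictMonoOn.Iic_union_Ici (a := 0) ?_ ?_
  · refine (strictMono_mul_left_of_pos hl).strictMonoOn _ |>.congr fun y hy => ?_
    simp [min_eq_left (mem_Iic.1 hy), max_eq_right (mem_Iic.1 hy)]
  · refine (strictMono_mul_left_of_pos hr).strictMonoOn _ |>.congr fun y hy => ?_
    simp [min_eq_right (mem_Ici.1 hy), max_eq_left (mem_Ici.1 hy)]

end kinkedQuadratic

/- With `u = c - a`, `v = b - c`, the tangent lines of `kinkedQuadratic (k * v ^ 2) (k * u ^ 2)`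
at `-u` and at `v` both meet the vertical axis at height `-k * u ^ 2 * v ^ 2 / 2`, and their slopes
differ by `k * u * v * (u + v)`; choosing `k` makes this `α - β`, and an affine term then fixes the
slopes and the common height. -/
theorem exists_strictConvexOn_tangents_meet {a b c β α : ℝ} (hac : a < c) (hcb : c < b)
    (hβα : β < α) (γ : ℝ) :
    ∃ r : ℝ → ℝ, StrictConvexOn ℝ univ r ∧ Differentiable ℝ r ∧
      deriv r a = β ∧ deriv r b = α ∧ r a = β * (a - c) + γ ∧ r b = α * (b - c) + γ := by
  set u := c - a with hu
  set v := b - c with hv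
  have hu_pos : 0 < u := sub_pos.2 hac
  have hv_pos : 0 < v := sub_pos.2 hcb
  have ha : a - c = -u := by rw [hu]; ring
  set k := (α - β) / (u * v * (u + v))
  have hk : k * (u * v * (u + v)) = α - β := div_mul_cancel₀ _ (by positivity)
  have hk_pos : 0 < k := div_pos (sub_pos.2 hβα) (by positivity)
  set δ := β + k * u * v ^ 2
  set r : ℝ → ℝ := fun x =>
    γ + k * u ^ 2 * v ^ 2 / 2 + δ * (x - c) + kinkedQuadratic (k * v ^ 2) (k * u ^ 2) (x - c)
  set r' : ℝ → ℝ := fun x =>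
    δ + (k * v ^ 2 * min (x - c) 0 + k * u ^ 2 * max (x - c) 0)
  have hr : ∀ x, HasDerivAt r (r' x) x := fun x => by
    have hshift := (hasDerivAt_id x).sub_const c
    have h := ((hshift.const_mul δ).const_add (γ + k * u ^ 2 * v ^ 2 / 2)).add
      ((hasDerivAt_kinkedQuadratic (k * v ^ 2) (k * u ^ 2) (x - c)).comp x hshift)
    exact h.congr_deriv (by ring)
  have hdiff : Differentiable ℝ r := fun x => (hr x).differentiableAt
  have hderiv : deriv r = r' := funext fun x => (hr x).deriv
  have hmono : StrictMono r' :=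
    ((strictMono_deriv_kinkedQuadratic (by positivity) (by positivity)).comp
      (fun _ _ h => sub_lt_sub_right h c)).const_add δ
  refine ⟨r, StrictMono.strictConvexOn_univ_of_deriv hdiff.continuous (hderiv ▸ hmono), hdiff,
    ?_, ?_, ?_, ?_⟩
  · simp only [hderiv, r', ha, min_eq_left (neg_nonpos.2 hu_pos.le),
      max_eq_right (neg_nonpos.2 hu_pos.le)]
    ring
  · simp only [hderiv, r', ← hv, min_eq_right hv_pos.le, max_eq_left hv_pos.le]
    linear_combination hk
  · simp only [r, ha, kinkedQuadratic_of_nonpos (neg_nonpos.2 hu_pos.le)]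
    ring
  · simp only [r, ← hv, kinkedQuadratic_of_nonneg hv_pos.le]
    linear_combination v * hk

-- The rule `-r p + r q + r' q * (p - q) + h p` with `h = r`.
noncomputable def bregmanScore (r : ℝ → ℝ) (p q : ℝ) : ℝ := r q + deriv r q * (p - q)

theorem bregmanScore_lt_bregmanScore_self {r : ℝ → ℝ} (hconv : StrictConvexOn ℝ univ r)
    (hdiff : Differentiable ℝ r) {p q : ℝ} (hqp : q ≠ p) :
    bregmanScore r p q < bregmanScore r p p := by
  simpa [bregmanScore] using
    hconv.add_mul_sub_lt_of_hasDerivAt (mem_univ q) (mem_univ p) hqp.symm (hdiff q).hasDerivAt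

theorem lineset_realizable_by_proper_scoring_rule_general (q10 q11 qs β α γ : ℝ)
    (hqs1 : q10 < qs) (hqs2 : qs < q11) (hβα : β < α) :
    (∃ PS : ℝ → ℝ → ℝ,
      (∀ q : ℝ, ∃ a b : ℝ, ∀ p : ℝ, PS p q = a * p + b) ∧
      (∀ p q : ℝ, q ≠ p → PS p q < PS p p) ∧
      (∀ x : ℝ, PS x q10 = β * (x - qs) + γ) ∧
      (∀ x : ℝ, PS x q11 = α * (x - qs) + γ)) ∧
    (∃ r : ℝ → ℝ, StrictConvexOn ℝ Set.univ r ∧ Differentiable ℝ r ∧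
      deriv r q10 = β ∧ deriv r q11 = α ∧
      r q11 - r q10 = α * (q11 - qs) - β * (q10 - qs)) := by
  obtain ⟨r, hconv, hdiff, hβ, hα, hr10, hr11⟩ :=
    exists_strictConvexOn_tangents_meet hqs1 hqs2 hβα γ
  refine ⟨⟨bregmanScore r, fun q => ⟨deriv r q, r q - deriv r q * q, fun p => ?_⟩,
    fun p q => bregmanScore_lt_bregmanScore_self hconv hdiff, fun x => ?_, fun x => ?_⟩,
    r, hconv, hdiff, hβ, hα, by rw [hr10, hr11]; ring⟩
  · rw [bregmanScore]; ring
  · rw [bregmanScore, hβ, hr10]; ring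
  · rw [bregmanScore, hα, hr11]; ring

/-- **Every line-set with `β < α` comes from a strictly proper scoring rule (Lemma 5.3).**
Given `0 < q10 < q* < q11 < 1`, reals `β < α` and `γ`, there is a strictly proper scoring
rule `PS` (affine in its first argument, and for each `p` the map `q ↦ PS p q` has a
strict global maximum at `q = p`) with `PS(x, q10) = β(x − q*) + γ` and
`PS(x, q11) = α(x − q*) + γ` for all `x`; equivalently, there is a strictly convex
differentiable `r : ℝ → ℝ` with `r'(q10) = β`, `r'(q11) = α` and
`r(q11) − r(q10) = α(q11 − q*) − β(q10 − q*)`. -/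
theorem lineset_realizable_by_proper_scoring_rule (q10 q11 qs β α γ : ℝ)
    (hq10 : 0 < q10) (hcorr : q10 < q11) (hq11 : q11 < 1)
    (hqs1 : q10 < qs) (hqs2 : qs < q11) (hβα : β < α) :
    (∃ PS : ℝ → ℝ → ℝ,
      (∀ q : ℝ, ∃ a b : ℝ, ∀ p : ℝ, PS p q = a * p + b) ∧
      (∀ p q : ℝ, q ≠ p → PS p q < PS p p) ∧
      (∀ x : ℝ, PS x q10 = β * (x - qs) + γ) ∧
      (∀ x : ℝ, PS x q11 = α * (x - qs) + γ)) ∧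
    (∃ r : ℝ → ℝ, StrictConvexOn ℝ Set.univ r ∧ Differentiable ℝ r ∧
      deriv r q10 = β ∧ deriv r q11 = α ∧
      r q11 - r q10 = α * (q11 - qs) - β * (q10 - qs)) :=
  lineset_realizable_by_proper_scoring_rule_general q10 q11 qs β α γ hqs1 hqs2 hβα
end
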